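/- arXiv:1901.02209 — 12 statements merged into one kernel-verified Lean document; each statement's English description precedes it below -/
import Mathlib

section
/- Let G be a chordal graph and let T ⊆ V(G) be a set of terminal vertices. A vertex subset S ⊆ V(G) is a subset feedback vertex set of G with respect to T if and only if the induced subgraph G − S contains no T-triangle. -/
open SimpleGraph

variable {V : Type*}

/-- A `T`-triangle, represented as its vertex set: three pairwise adjacent
vertices at least one of which is a terminal. -/
def IsTTriangle (G : SimpleGraph V) (T Δ : Set V) : Prop :=
  ∃ a b c : V, Δ = {a, b, c} ∧ G.Adj a b ∧ G.Adj a c ∧ G.Adj b c ∧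
    (a ∈ T ∨ b ∈ T ∨ c ∈ T)

/-- The induced subgraph `G − S` contains a `T`-triangle. -/
def HasTTriangleAvoiding (G : SimpleGraph V) (T S : Set V) : Prop :=
  ∃ Δ : Set V, IsTTriangle G T Δ ∧ Δ ∩ S = ∅

/-- The induced subgraph `G − S` contains a `T`-cycle: a cycle of `G` avoiding
`S` and passing through a vertex of `T`. -/
def HasTCycleAvoiding (G : SimpleGraph V) (T S : Set V) : Prop :=
  ∃ (v : V) (c : G.Walk v v), c.IsCycle ∧ (∀ x ∈ c.support, x ∉ S) ∧
    ∃ t ∈ T, t ∈ c.support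

/-- `S` is a subset feedback vertex set of `G` with respect to `T`:
`G − S` contains no `T`-cycle. -/
def IsSubsetFVS (G : SimpleGraph V) (T S : Set V) : Prop :=
  ¬ HasTCycleAvoiding G T S

/-- A cycle has a chord: an edge of `G` between two vertices of the cycle
which is not an edge of the cycle. -/
def WalkHasChord (G : SimpleGraph V) {v : V} (c : G.Walk v v) : Prop :=
  ∃ x y : V, x ∈ c.support ∧ y ∈ c.support ∧ G.Adj x y ∧ s(x, y) ∉ c.edges

/-- A graph is chordal if every cycle of length at least four has a chord. -/
def Chordal (G : SimpleGraph V) : Prop :=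
  ∀ (v : V) (c : G.Walk v v), c.IsCycle → 4 ≤ c.length → WalkHasChord G c

/-- A bridge: an edge lying on no cycle of the graph. -/
def IsBridgeEdge (G : SimpleGraph V) (e : Sym2 V) : Prop :=
  e ∈ G.edgeSet ∧ ∀ (v : V) (c : G.Walk v v), c.IsCycle → e ∉ c.edges

/-- `(K, I)` is a split partition of `G`: `K` is a clique, `I` an independent
set, and they partition the vertex set. -/
def IsSplitPartition (G : SimpleGraph V) (K I : Set V) : Prop :=
  K ∪ I = Set.univ ∧ K ∩ I = ∅ ∧ G.IsClique K ∧ I.Pairwise fun a b => ¬ G.Adj a b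

/-- The closed neighbourhood `N[v]` of a vertex. -/
def closedNbhd (G : SimpleGraph V) (v : V) : Set V := insert v (G.neighborSet v)

/-- A vertex is simplicial if its closed neighbourhood is a clique. -/
def IsSimplicial (G : SimpleGraph V) (v : V) : Prop := G.IsClique (closedNbhd G v)

/-- A maximal clique. -/
def IsMaxClique (G : SimpleGraph V) (C : Set V) : Prop :=
  G.IsClique C ∧ ∀ C' : Set V, G.IsClique C' → C ⊆ C' → C' = C

/-- A matching, as a set of edges of `G` no two of which share an endvertex. -/
def IsEdgeMatching (G : SimpleGraph V) (M : Set (Sym2 V)) : Prop :=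
  M ⊆ G.edgeSet ∧ ∀ e ∈ M, ∀ f ∈ M, e ≠ f → ∀ z : V, z ∈ e → z ∉ f

/-- A set of edges saturates a vertex if some edge of it is incident with it. -/
def Saturates (M : Set (Sym2 V)) (z : V) : Prop := ∃ e ∈ M, z ∈ e

/-- `M` is a `t`-expansion of `X` into `Y`: every edge of `M` goes between `X`
and `Y`, every vertex of `X` is incident with exactly `t` edges of `M`, and the
edges of `M` are incident with exactly `t * |X|` distinct vertices of `Y`. -/
def IsExpansion (G : SimpleGraph V) (t : ℕ) (X Y : Set V) (M : Set (Sym2 V)) : Prop :=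
  M ⊆ G.edgeSet ∧ (∀ e ∈ M, ∃ x ∈ X, ∃ y ∈ Y, e = s(x, y)) ∧
    (∀ x ∈ X, {e ∈ M | x ∈ e}.ncard = t) ∧
    {y ∈ Y | Saturates M y}.ncard = t * X.ncard

/-! A chord `xy` of a cycle splits it into two strictly shorter cycles, through `x` and through
`y`, which together cover its vertices. In a chordal graph, repeating this on cycles of length at
least four shows that every vertex of a cycle lies on a triangle spanned by vertices of that
cycle; so a `T`-cycle avoiding `S` yields a `T`-triangle avoiding `S`. -/

section

variable {G : SimpleGraph V}

namespace SimpleGraph.Walk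

lemma IsCycle.cons_isCycle_of_append {u v : V} {p : G.Walk u v} {q : G.Walk v u}
    (hc : (p.append q).IsCycle) (h : G.Adj u v) (hchord : s(u, v) ∉ (p.append q).edges) :
    (cons h q).IsCycle ∧ (cons h.symm p).IsCycle := by
  rw [edges_append, List.mem_append, not_or] at hchord
  have hp : ¬ p.Nil := fun hp => h.ne hp.eq
  have hq : ¬ q.Nil := fun hq => h.ne hq.eq.symm
  refine ⟨(cons_isCycle_iff _ _).mpr ⟨hc.isPath_of_append_right hp, hchord.2⟩,
    (cons_isCycle_iff _ _).mpr ⟨hc.isPath_of_append_left hq, ?_⟩⟩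
  rw [Sym2.eq_swap]
  exact hchord.1

lemma IsCycle.exists_isCycle_isCycle_of_chord {v x y : V} {c : G.Walk v v} (hc : c.IsCycle)
    (hx : x ∈ c.support) (hy : y ∈ c.support) (hxy : G.Adj x y) (hchord : s(x, y) ∉ c.edges) :
    ∃ (c₁ : G.Walk x x) (c₂ : G.Walk y y), c₁.IsCycle ∧ c₂.IsCycle ∧
      c₁.length < c.length ∧ c₂.length < c.length ∧
      ∀ w, w ∈ c.support ↔ w ∈ c₁.support ∨ w ∈ c₂.support := by
  classical
  set c' := c.rotate x hx
  have hsupp : ∀ w, w ∈ c'.support ↔ w ∈ c.support := fun w => c.mem_support_rotate_iff x hx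
  have hy' : y ∈ c'.support := (hsupp y).mpr hy
  have hspec := c'.take_spec hy'
  set p := c'.takeUntil y hy'
  set q := c'.dropUntil y hy'
  have hc' : (p.append q).IsCycle := hspec ▸ hc.rotate hx
  have hchord' : s(x, y) ∉ (p.append q).edges := by
    rwa [hspec, (c.rotate_edges x hx).mem_iff]
  have hlen : p.length + q.length = c.length := by
    rw [← length_append, hspec, length_rotate]
  obtain ⟨hc₁, hc₂⟩ := hc'.cons_isCycle_of_append hxy hchord'
  refine ⟨cons hxy q, cons hxy.symm p, hc₁, hc₂, ?_, ?_, fun w => ?_⟩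
  · have := hc₂.three_le_length
    simp only [length_cons] at this ⊢
    omega
  · have := hc₁.three_le_length
    simp only [length_cons] at this ⊢
    omega
  · rw [← hsupp, ← hspec, mem_support_append_iff]
    simp only [support_cons, List.mem_cons]
    constructor
    · tauto
    · rintro ((rfl | hw) | (rfl | hw))
      · exact Or.inl p.start_mem_support
      · exact Or.inr hw
      · exact Or.inr q.start_mem_support
      · exact Or.inl hw

lemma exists_adj_of_length_eq_three {v t : V} {c : G.Walk v v} (h3 : c.length = 3)
    (ht : t ∈ c.support) :
    ∃ a b, G.Adj t a ∧ G.Adj t b ∧ G.Adj a b ∧ a ∈ c.support ∧ b ∈ c.support := by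
  match c, h3 with
  | cons hva (cons hab (cons hbv nil)), _ =>
    simp only [support_cons, support_nil, List.mem_cons, List.not_mem_nil, or_false] at ht ⊢
    rcases ht with rfl | rfl | rfl | rfl
    · exact ⟨_, _, hva, hbv.symm, hab, by simp, by simp⟩
    · exact ⟨_, _, hva.symm, hab, hbv.symm, by simp, by simp⟩
    · exact ⟨_, _, hbv, hab.symm, hva, by simp, by simp⟩
    · exact ⟨_, _, hva, hbv.symm, hab, by simp, by simp⟩

end SimpleGraph.Walk

theorem Chordal.exists_adj_of_mem_support_of_isCycle (hG : Chordal G) {v t : V}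
    {c : G.Walk v v} (hc : c.IsCycle) (ht : t ∈ c.support) :
    ∃ a b, G.Adj t a ∧ G.Adj t b ∧ G.Adj a b ∧ a ∈ c.support ∧ b ∈ c.support := by
  induction hn : c.length using Nat.strong_induction_on generalizing v c with
  | _ n ih =>
  by_cases h4 : 4 ≤ c.length
  · obtain ⟨x, y, hx, hy, hxy, hchord⟩ := hG v c hc h4
    obtain ⟨c₁, c₂, hc₁, hc₂, hlen₁, hlen₂, hcover⟩ :=
      hc.exists_isCycle_isCycle_of_chord hx hy hxy hchord
    rcases (hcover t).mp ht with ht | ht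
    · obtain ⟨a, b, hta, htb, hab, ha, hb⟩ := ih _ (hn ▸ hlen₁) hc₁ ht rfl
      exact ⟨a, b, hta, htb, hab, (hcover a).mpr (.inl ha), (hcover b).mpr (.inl hb)⟩
    · obtain ⟨a, b, hta, htb, hab, ha, hb⟩ := ih _ (hn ▸ hlen₂) hc₂ ht rfl
      exact ⟨a, b, hta, htb, hab, (hcover a).mpr (.inr ha), (hcover b).mpr (.inr hb)⟩
  · exact Walk.exists_adj_of_length_eq_three (by have := hc.three_le_length; omega) ht

lemma hasTTriangleAvoiding_iff {T S : Set V} :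
    HasTTriangleAvoiding G T S ↔ ∃ a b c, G.Adj a b ∧ G.Adj b c ∧ G.Adj c a ∧
      a ∈ T ∧ a ∉ S ∧ b ∉ S ∧ c ∉ S := by
  constructor
  · rintro ⟨_, ⟨a, b, c, rfl, hab, hac, hbc, hT⟩, hS⟩
    simp only [Set.eq_empty_iff_forall_notMem, Set.mem_inter_iff, Set.mem_insert_iff,
      Set.mem_singleton_iff, not_and] at hS
    have ha := hS a (by simp)
    have hb := hS b (by simp)
    have hc := hS c (by simp)
    rcases hT with hT | hT | hT
    · exact ⟨a, b, c, hab, hbc, hac.symm, hT, ha, hb, hc⟩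
    · exact ⟨b, c, a, hbc, hac.symm, hab, hT, hb, hc, ha⟩
    · exact ⟨c, a, b, hac.symm, hab, hbc, hT, hc, ha, hb⟩
  · rintro ⟨a, b, c, hab, hbc, hca, hT, ha, hb, hc⟩
    refine ⟨{a, b, c}, ⟨a, b, c, rfl, hab, hca.symm, hbc, .inl hT⟩, ?_⟩
    ext w
    simp only [Set.mem_inter_iff, Set.mem_insert_iff, Set.mem_singleton_iff,
      Set.mem_empty_iff_false, iff_false, not_and]
    rintro (rfl | rfl | rfl) <;> assumption

end

theorem stmt0_general {V : Type} (G : SimpleGraph V) (T S : Set V)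
    (hG : Chordal G) :
    IsSubsetFVS G T S ↔ ¬ HasTTriangleAvoiding G T S := by
  rw [hasTTriangleAvoiding_iff]
  constructor
  · rintro hFVS ⟨a, b, c, hab, hbc, hca, hT, ha, hb, hc⟩
    refine hFVS ⟨a, .cons hab (.cons hbc (.cons hca .nil)), ?_, ?_, a, hT, by simp⟩
    · rw [Walk.cons_isCycle_iff]
      simp [hab.ne, hbc.ne, hca.ne, hab.ne', hca.ne']
    · simp only [Walk.support_cons, Walk.support_nil, List.mem_cons, List.not_mem_nil, or_false]
      rintro x (rfl | rfl | rfl | rfl) <;> assumption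
  · rintro hno ⟨v, c, hc, hS, t, hT, ht⟩
    obtain ⟨a, b, hta, htb, hab, ha, hb⟩ := hG.exists_adj_of_mem_support_of_isCycle hc ht
    exact hno ⟨t, a, b, hta, hab, htb.symm, hT, hS t ht, hS a ha, hS b hb⟩

/-- In a chordal graph `G` with terminals `T`, a set `S` is a
subset feedback vertex set w.r.t. `T` iff `G − S` contains no `T`-triangle. -/
theorem stmt0 {V : Type} [Fintype V] (G : SimpleGraph V) (T S : Set V)
    (hG : Chordal G) :
    IsSubsetFVS G T S ↔ ¬ HasTTriangleAvoiding G T S :=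
  stmt0_general G T S hG
end

section
/- Let G be a chordal graph with terminal set T ⊆ V(G), and let v be a vertex of G with v ∉ T such that no neighbour of v belongs to T. Then G contains a T-cycle if and only if the induced subgraph G − {v} contains a T-cycle. -/
open SimpleGraph

variable {V : Type*}

/-!
In a chordal graph every vertex `t` on a cycle lies on a triangle: a chord of a cycle of length
at least four splits it into two strictly shorter cycles, one of which still passes through `t`.
So if `t ∈ T` lies on a cycle, it lies on a triangle `t a b`; the vertices `a` and `b` are
neighbours of the terminal `t`, hence differ from `v`, and `t ≠ v` since `v ∉ T`. This triangle
is a `T`-cycle of `G − v`.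
-/

namespace SimpleGraph.Walk
variable {G : SimpleGraph V}

lemma isCycle_triangle {a b c : V} (hab : G.Adj a b) (hbc : G.Adj b c) (hca : G.Adj c a) :
    (cons hab (cons hbc (cons hca nil))).IsCycle := by
  rw [cons_isCycle_iff]
  simp only [isPath_def, support_cons, support_nil, edges_cons, edges_nil]
  grind [hab.ne, hbc.ne, hca.ne]

lemma exists_triangle_of_length_eq_three {u : V} {c : G.Walk u u} (h : c.length = 3) :
    ∃ a b, G.Adj u a ∧ G.Adj u b ∧ G.Adj a b := by
  match c, h with
  | cons h₁ (cons h₂ (cons h₃ nil)), _ => exact ⟨_, _, h₁, h₃.symm, h₂⟩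

variable [DecidableEq V]

lemma IsCycle.exists_shorter_cycle_of_chord_at_start {x y t : V} {c : G.Walk x x} (hc : c.IsCycle)
    (hy : y ∈ c.support) (hxy : G.Adj x y) (he : s(x, y) ∉ c.edges) (ht : t ∈ c.support) :
    ∃ (w : V) (c' : G.Walk w w), c'.IsCycle ∧ c'.length < c.length ∧ t ∈ c'.support := by
  -- The chord closes both arcs of `c` between `x` and `y` into cycles; their lengths add up to
  -- `c.length + 2` and each is at least `3`.
  have hspec := c.take_spec hy
  set p := c.takeUntil y hy
  set q := c.dropUntil y hy
  have hp : (cons hxy.symm p).IsCycle :=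
    (cons_isCycle_iff p hxy.symm).2 ⟨hc.isPath_takeUntil hy, fun h =>
      he (c.edges_takeUntil_subset_edges hy (Sym2.eq_swap ▸ h))⟩
  have hq : (cons hxy q).IsCycle :=
    (cons_isCycle_iff q hxy).2 ⟨(hspec ▸ hc).isPath_of_append_right (not_nil_of_ne hxy.ne),
      fun h => he (c.edges_dropUntil_subset_edges hy h)⟩
  have hlen : p.length + q.length = c.length := by rw [← length_append, hspec]
  have hp3 : 3 ≤ p.length + 1 := hp.three_le_length
  have hq3 : 3 ≤ q.length + 1 := hq.three_le_length
  rw [← hspec, mem_support_append_iff] at ht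
  rcases ht with ht | ht
  · exact ⟨y, _, hp, by simp only [length_cons]; omega, by simp [ht]⟩
  · exact ⟨x, _, hq, by simp only [length_cons]; omega, by simp [ht]⟩

lemma IsCycle.exists_shorter_cycle_of_isChord {u t : V} {c : G.Walk u u} (hc : c.IsCycle)
    {e : Sym2 V} (he : c.IsChord e) (ht : t ∈ c.support) :
    ∃ c' : G.Walk t t, c'.IsCycle ∧ c'.length < c.length := by
  induction e with | _ x y => ?_
  obtain ⟨hxy, hnot, hx, hy⟩ := isChord_sym2Mk.1 he
  obtain ⟨w, c', hc', hlen, htc'⟩ := (hc.rotate hx).exists_shorter_cycle_of_chord_at_start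
    ((c.mem_support_rotate_iff x hx).2 hy) hxy
    (fun h => hnot ((c.rotate_edges x hx).perm.mem_iff.1 h))
    ((c.mem_support_rotate_iff x hx).2 ht)
  exact ⟨c'.rotate t htc', hc'.rotate htc', by simpa using hlen⟩

end SimpleGraph.Walk

open SimpleGraph.Walk in
lemma Chordal.exists_triangle_of_isCycle {G : SimpleGraph V} (hG : Chordal G) {t : V}
    {c : G.Walk t t} (hc : c.IsCycle) : ∃ a b, G.Adj t a ∧ G.Adj t b ∧ G.Adj a b := by
  classical
  induction h : c.length using Nat.strong_induction_on generalizing c with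
  | _ n ih =>
  by_cases h4 : 4 ≤ c.length
  · obtain ⟨x, y, hx, hy, hxy, he⟩ := hG t c hc h4
    obtain ⟨c', hc', hlen⟩ := hc.exists_shorter_cycle_of_isChord
      (isChord_sym2Mk.2 ⟨hxy, he, hx, hy⟩) c.start_mem_support
    exact ih _ (h ▸ hlen) hc' rfl
  · have := hc.three_le_length
    exact exists_triangle_of_length_eq_three (c := c) (by omega)

theorem stmt1_general {V : Type} (G : SimpleGraph V) (T : Set V)
    (hG : Chordal G) (v : V) (hvT : v ∉ T)
    (hnbr : ∀ u : V, G.Adj v u → u ∉ T) :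
    HasTCycleAvoiding G T ∅ ↔ HasTCycleAvoiding G T {v} := by
  classical
  constructor
  · rintro ⟨u, c, hc, -, t, htT, htc⟩
    obtain ⟨a, b, hta, htb, hab⟩ := hG.exists_triangle_of_isCycle (hc.rotate htc)
    have hnv : ∀ x, G.Adj t x → x ≠ v := fun x htx hxv => hnbr t (hxv ▸ htx.symm) htT
    refine ⟨t, _, Walk.isCycle_triangle hta hab htb.symm, ?_, t, htT, by simp⟩
    simp only [Walk.support_cons, Walk.support_nil, List.mem_cons, List.not_mem_nil, or_false,
      Set.mem_singleton_iff]
    rintro x (rfl | rfl | rfl | rfl)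
    exacts [fun h => hvT (h ▸ htT), hnv x hta, hnv x htb, fun h => hvT (h ▸ htT)]
  · rintro ⟨u, c, hc, -, hT⟩
    exact ⟨u, c, hc, fun _ _ => id, hT⟩

/-- deleting a non-terminal vertex with no terminal neighbour
preserves the existence of a `T`-cycle in a chordal graph. -/
theorem stmt1 {V : Type} [Fintype V] (G : SimpleGraph V) (T : Set V)
    (hG : Chordal G) (v : V) (hvT : v ∉ T)
    (hnbr : ∀ u : V, G.Adj v u → u ∉ T) :
    HasTCycleAvoiding G T ∅ ↔ HasTCycleAvoiding G T {v} :=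
  stmt1_general G T hG v hvT hnbr
end

section
/- Let G be a connected graph with at least two vertices and let 𝒯 be a clique tree of G with at least two nodes. If C is a leaf node of 𝒯 (a node of degree exactly one), then C is a simplicial clique of G; that is, there exists a vertex v ∈ C with N[v] = C. -/
open SimpleGraph

variable {V : Type*}

/-!
Let `D` be the unique neighbour of the leaf `C`. Since `C` is a maximal clique, it has a
vertex `v ∉ D`. For any other maximal clique `K`, the path from `C` to `K` in the clique tree
starts with `D`, so `C ∩ K ⊆ D` and hence `v ∉ K`. Thus `C` is the only maximal clique
containing `v`; as every edge `vu` lies in some maximal clique, `N[v] = C`.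
-/

lemma SimpleGraph.Walk.mem_support_of_forall_adj_eq {W : Type*} {H : SimpleGraph W}
    {u w d : W} (p : H.Walk u w) (hne : u ≠ w) (hd : ∀ x, H.Adj u x → x = d) :
    d ∈ p.support := by
  cases p with
  | nil => exact absurd rfl hne
  | cons h q =>
    obtain rfl := hd _ h
    exact List.mem_cons_of_mem _ q.start_mem_support

lemma IsMaxClique.not_subset {G : SimpleGraph V} {C D : Set V} (hC : IsMaxClique G C)
    (hD : G.IsClique D) (hne : C ≠ D) : ¬ C ⊆ D :=
  fun hsub => hne (hC.2 D hD hsub).symm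

lemma exists_isMaxClique_superset {G : SimpleGraph V} {s : Set V} (hs : G.IsClique s) :
    ∃ C, IsMaxClique G C ∧ s ⊆ C := by
  obtain ⟨C, hsC, hC⟩ := zorn_subset_nonempty {t | G.IsClique t}
    (fun c hc hchain _ => ⟨⋃₀ c, (isClique_sUnion hchain.directedOn).2 hc,
      fun _ => Set.subset_sUnion_of_mem⟩) s hs
  exact ⟨C, ⟨hC.1, fun K hK hCK => (hC.2 hK hCK).antisymm hCK⟩, hsC⟩

lemma closedNbhd_eq_of_forall_isMaxClique_eq {G : SimpleGraph V} {C : Set V} {v : V}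
    (hC : G.IsClique C) (hv : v ∈ C) (huniq : ∀ K, IsMaxClique G K → v ∈ K → K = C) :
    closedNbhd G v = C := by
  ext u
  constructor
  · rintro (rfl | hvu)
    · exact hv
    · obtain ⟨K, hK, hvuK⟩ := exists_isMaxClique_superset (G.isClique_pair.2 fun _ => hvu)
      exact huniq K hK (hvuK (by simp)) ▸ hvuK (by simp)
  · intro hu
    obtain rfl | huv := eq_or_ne u v
    · exact Set.mem_insert u _
    · exact Set.mem_insert_of_mem _ (hC hv hu huv.symm)

theorem stmt4_general {V : Type} (G : SimpleGraph V)
    (𝒯 : SimpleGraph {C : Set V // IsMaxClique G C})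
    (htree : 𝒯.IsTree)
    (hinter : ∀ (C₁ C₂ C : {C : Set V // IsMaxClique G C})
      (p : 𝒯.Walk C₁ C₂), p.IsPath → C ∈ p.support → C₁.val ∩ C₂.val ⊆ C.val)
    (C : {C : Set V // IsMaxClique G C})
    (hleaf : ∃! D : {C : Set V // IsMaxClique G C}, 𝒯.Adj C D) :
    ∃ v ∈ C.val, closedNbhd G v = C.val := by
  obtain ⟨D, hCD, hD⟩ := hleaf
  obtain ⟨v, hvC, hvD⟩ :=
    Set.not_subset.1 (C.2.not_subset D.2.1 fun h => hCD.ne (Subtype.ext h))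
  refine ⟨v, hvC, closedNbhd_eq_of_forall_isMaxClique_eq C.2.1 hvC fun K hK hvK => ?_⟩
  by_contra hKC
  obtain ⟨p, hp⟩ := (htree.connected.preconnected C ⟨K, hK⟩).exists_isPath
  have hDp : D ∈ p.support :=
    p.mem_support_of_forall_adj_eq (fun h => hKC (congrArg Subtype.val h).symm) hD
  exact hvD (hinter C ⟨K, hK⟩ D p hp hDp ⟨hvC, hvK⟩)

/-- a leaf node of a clique tree of a connected graph with at
least two vertices is a simplicial clique. -/
theorem stmt4 {V : Type} [Fintype V] (G : SimpleGraph V)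
    (hconn : G.Connected) (hV : 2 ≤ Fintype.card V)
    (𝒯 : SimpleGraph {C : Set V // IsMaxClique G C})
    (htree : 𝒯.IsTree)
    (hinter : ∀ (C₁ C₂ C : {C : Set V // IsMaxClique G C})
      (p : 𝒯.Walk C₁ C₂), p.IsPath → C ∈ p.support → C₁.val ∩ C₂.val ⊆ C.val)
    (hnodes : ∃ C₁ C₂ : {C : Set V // IsMaxClique G C}, C₁ ≠ C₂)
    (C : {C : Set V // IsMaxClique G C})
    (hleaf : ∃! D : {C : Set V // IsMaxClique G C}, 𝒯.Adj C D) :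
    ∃ v ∈ C.val, closedNbhd G v = C.val :=
  stmt4_general G 𝒯 htree hinter C hleaf
end

section
/- Let t be a positive integer and let G be a bipartite graph with vertex bipartition (P, Q) such that |Q| > ℓ·t, where ℓ is the size of a maximum matching of G, and such that Q contains no isolated vertices. Then there exist nonempty vertex sets X ⊆ P and Y ⊆ Q, a vertex w ∈ Y, and a t-expansion M of X into Y, such that no vertex of Y has a neighbour outside X and no edge of M is incident with w. -/
open SimpleGraph

variable {V : Type*}

/-!
Call `#Y - t * #N(Y)` the surplus of `Y ⊆ Q`. If no subset of `Q` had positive surplus, Hall's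
theorem (with every vertex of `P` taken `t` times) would send `Q` injectively to `t` copies of
its neighbours, and keeping one `Q`-vertex per `P`-vertex used gives a matching of size at least
`|Q| / t > ℓ`. So a `Y ⊆ Q` of maximum surplus has positive surplus; let `X = N(Y)`. For
`X' ⊆ X`, comparing `Y` with `Y \ N(X')`, whose neighbourhood avoids `X'`, gives Hall's condition
`t * #X' ≤ #(N(X') ∩ Y)`, so Hall's theorem again yields a `t`-expansion of `X` into `Y`. It
saturates `t * #X < #Y` vertices of `Y`, which leaves a free vertex `w`.
-/

open Finset

theorem IsExpansion.exists_not_saturates {G : SimpleGraph V} {t : ℕ} {X Y : Set V}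
    {M : Set (Sym2 V)} (hM : IsExpansion G t X Y M) (hY : Y.Finite)
    (hXY : t * X.ncard < Y.ncard) : ∃ w ∈ Y, ¬ Saturates M w := by
  by_contra! hsat
  have hle : Y.ncard ≤ t * X.ncard := calc
    Y.ncard ≤ {y ∈ Y | Saturates M y}.ncard :=
      Set.ncard_le_ncard (fun y hy => ⟨hy, hsat y hy⟩) (hY.subset fun y hy => hy.1)
    _ = t * X.ncard := hM.2.2.2
  lia

theorem isEdgeMatching_image {G : SimpleGraph V} {ι : Type*} {s : Set ι} {a b : ι → V}
    (hadj : ∀ i ∈ s, G.Adj (a i) (b i))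
    (hshare : ∀ i ∈ s, ∀ j ∈ s, ∀ z, z ∈ s(a i, b i) → z ∈ s(a j, b j) → i = j) :
    IsEdgeMatching G ((fun i => s(a i, b i)) '' s) ∧ Set.InjOn (fun i => s(a i, b i)) s := by
  refine ⟨⟨?_, ?_⟩, fun i hi j hj hij => hshare i hi j hj (a i) (by simp) (by simp [← hij])⟩
  · rintro _ ⟨i, hi, rfl⟩
    exact hadj i hi
  · rintro _ ⟨i, hi, rfl⟩ _ ⟨j, hj, rfl⟩ hne z hzi hzj
    exact hne (by rw [hshare i hi j hj z hzi hzj])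

theorem isExpansion_range_of_injective {G : SimpleGraph V} {t : ℕ} {X Y : Finset V}
    (hXY : Disjoint X Y) {g : X × Fin t → V} (hg : Function.Injective g)
    (hgadj : ∀ p, G.Adj p.1 (g p) ∧ g p ∈ Y) :
    IsExpansion G t X Y (Set.range fun p : X × Fin t => s((p.1 : V), g p)) := by
  have hmemX : ∀ x ∈ X, ∀ p, x ∈ s((p.1 : V), g p) ↔ x = p.1 := fun x hx p => by
    simpa using fun h : x = g p => absurd (h ▸ (hgadj p).2) (Finset.disjoint_left.mp hXY hx)
  have hmemY : ∀ y ∈ Y, ∀ p, y ∈ s((p.1 : V), g p) ↔ y = g p := fun y hy p => by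
    simpa using fun h : y = p.1 => absurd hy (Finset.disjoint_left.mp hXY (h ▸ p.1.2))
  have hinj : Function.Injective fun p : X × Fin t => s((p.1 : V), g p) := fun p q h => by
    have h' : s((p.1 : V), g p) = s((q.1 : V), g q) := h
    exact hg ((hmemY _ (hgadj p).2 q).mp (h' ▸ Sym2.mem_mk_right _ _))
  refine ⟨?_, ?_, ?_, ?_⟩
  · rintro _ ⟨p, rfl⟩
    exact (hgadj p).1
  · rintro _ ⟨p, rfl⟩
    exact ⟨p.1, p.1.2, g p, (hgadj p).2, rfl⟩
  · intro x hx
    have hincident : {e ∈ Set.range fun p : X × Fin t => s((p.1 : V), g p) | x ∈ e} =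
        Set.range fun i : Fin t => s(x, g (⟨x, hx⟩, i)) := by
      ext e
      constructor
      · rintro ⟨⟨p, rfl⟩, hxp⟩
        have hpx : p.1 = ⟨x, hx⟩ := Subtype.ext ((hmemX x hx p).mp hxp).symm
        exact ⟨p.2, by rw [show p = (⟨x, hx⟩, p.2) from Prod.ext hpx rfl]⟩
      · rintro ⟨i, rfl⟩
        exact ⟨⟨(⟨x, hx⟩, i), rfl⟩, Sym2.mem_mk_left _ _⟩
    have hinj' : Function.Injective fun i : Fin t => s(x, g (⟨x, hx⟩, i)) := fun i j h =>
      (Prod.ext_iff.mp (@hinj (⟨x, hx⟩, i) (⟨x, hx⟩, j) h)).2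
    rw [hincident, Set.ncard_range_of_injective hinj', Nat.card_eq_fintype_card, Fintype.card_fin]
  · have hsat : {y ∈ (Y : Set V) |
        Saturates (Set.range fun p : X × Fin t => s((p.1 : V), g p)) y} = Set.range g := by
      ext y
      constructor
      · rintro ⟨hy, _, ⟨p, rfl⟩, hyp⟩
        exact ⟨p, ((hmemY y hy p).mp hyp).symm⟩
      · rintro ⟨p, rfl⟩
        exact ⟨(hgadj p).2, _, ⟨p, rfl⟩, Sym2.mem_mk_right _ _⟩
    rw [hsat, Set.ncard_range_of_injective hg, Nat.card_eq_fintype_card, Fintype.card_prod,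
      Fintype.card_coe, Fintype.card_fin, Set.ncard_coe_finset, mul_comm]

namespace SimpleGraph

variable [Fintype V] [DecidableEq V] (G : SimpleGraph V) [DecidableRel G.Adj]

def nbhd (Y : Finset V) : Finset V := Y.biUnion fun y => G.neighborFinset y

variable {G}

@[simp]
theorem mem_nbhd {Y : Finset V} {z : V} : z ∈ G.nbhd Y ↔ ∃ y ∈ Y, G.Adj y z := by
  simp [nbhd]

theorem exists_injective_adj_of_card_le_mul {S : Finset V} {t : ℕ}
    (hS : ∀ s ⊆ S, #s ≤ t * #(G.nbhd s)) :
    ∃ f : S → V × Fin t, Function.Injective f ∧ ∀ q : S, G.Adj q (f q).1 := by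
  obtain ⟨f, hf, hadj⟩ := (all_card_le_biUnion_card_iff_exists_injective
    fun q : S => G.neighborFinset q ×ˢ (univ : Finset (Fin t))).mp fun s => by
      have hbUnion : s.biUnion (fun q : S => G.neighborFinset q ×ˢ (univ : Finset (Fin t))) =
          G.nbhd (s.map (Function.Embedding.subtype _)) ×ˢ univ := by
        ext ⟨v, i⟩
        simp
      rw [hbUnion, card_product, card_univ, Fintype.card_fin, mul_comm, ← card_map]
      exact hS _ fun v => by simp +contextual
  exact ⟨f, hf, fun q => by simpa using (mem_product.mp (hadj q)).1⟩

theorem exists_isEdgeMatching_of_card_le_mul {S : Finset V} (hind : G.IsIndepSet S) {t : ℕ}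
    (hS : ∀ s ⊆ S, #s ≤ t * #(G.nbhd s)) :
    ∃ M, IsEdgeMatching G M ∧ #S ≤ t * M.ncard := by
  obtain ⟨f, hf, hadj⟩ := exists_injective_adj_of_card_le_mul hS
  set I := univ.image fun q => (f q).1
  obtain ⟨u, -, hu, huI⟩ :=
    exists_subset_injOn_image_eq_of_surjOn (f := fun q => (f q).1) Set.univ I
      fun p hp => by simpa [I] using hp
  have hshare : ∀ i ∈ (u : Set S), ∀ j ∈ (u : Set S), ∀ z,
      z ∈ s((f i).1, (i : V)) → z ∈ s((f j).1, (j : V)) → i = j := by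
    intro i hi j hj z hzi hzj
    have hnotin : ∀ k : S, (f k).1 ∉ S := fun k hk =>
      hind k.2 hk (hadj k).ne (hadj k)
    rcases Sym2.mem_iff.mp hzi with rfl | rfl <;> rcases Sym2.mem_iff.mp hzj with h | h
    · exact hu hi hj h
    · exact absurd (h ▸ j.2) (hnotin i)
    · exact absurd (h ▸ i.2) (hnotin j)
    · exact Subtype.ext h
  obtain ⟨hM, hinj⟩ := isEdgeMatching_image (fun q _ => (hadj q).symm) hshare
  refine ⟨_, hM, ?_⟩
  calc #S = #(univ.image f) := by rw [card_image_of_injective _ hf, card_univ, Fintype.card_coe]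
    _ ≤ #(I ×ˢ (univ : Finset (Fin t))) := card_le_card fun p => by
        simp only [mem_image, mem_univ, true_and, mem_product, and_true, I]
        rintro ⟨q, rfl⟩
        exact ⟨q, rfl⟩
    _ = t * #u := by rw [card_product, card_univ, Fintype.card_fin, mul_comm, ← huI,
        card_image_of_injOn hu]
    _ = t * _ := by rw [hinj.ncard_image, Set.ncard_coe_finset]

theorem exists_mul_card_nbhd_lt_card {S : Finset V} (hind : G.IsIndepSet S) {t ℓ : ℕ}
    (hℓ : ∀ M, IsEdgeMatching G M → M.ncard ≤ ℓ) (hS : ℓ * t < #S) :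
    ∃ Y ⊆ S, t * #(G.nbhd Y) < #Y := by
  by_contra! h
  obtain ⟨M, hM, hcard⟩ := exists_isEdgeMatching_of_card_le_mul hind h
  have := Nat.mul_le_mul_left t (hℓ M hM)
  lia

variable (G) in
def surplus (t : ℕ) (Y : Finset V) : ℤ := #Y - t * #(G.nbhd Y)

theorem mul_card_le_card_nbhd_inter {t : ℕ} {X Y : Finset V}
    (hY : ∀ Y' ⊆ Y, G.surplus t Y' ≤ G.surplus t Y) (hX : X ⊆ G.nbhd Y) :
    t * #X ≤ #(G.nbhd X ∩ Y) := by
  have hsub : G.nbhd (Y \ G.nbhd X) ⊆ G.nbhd Y \ X := by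
    intro z hz
    obtain ⟨y, hy, hyz⟩ := mem_nbhd.mp hz
    rw [mem_sdiff, mem_nbhd] at hy
    exact mem_sdiff.mpr ⟨mem_nbhd.mpr ⟨y, hy.1, hyz⟩, fun hzX => hy.2 ⟨z, hzX, hyz.symm⟩⟩
  have hnbhd := card_le_card hsub
  rw [card_sdiff_of_subset hX] at hnbhd
  have hsurplus := hY (Y \ G.nbhd X) sdiff_subset
  have hsplit : #(Y \ G.nbhd X) + #(Y ∩ G.nbhd X) = #Y := card_sdiff_add_card_inter _ _
  rw [inter_comm]
  unfold surplus at hsurplus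
  have hXle : #X ≤ #(G.nbhd Y) := card_le_card hX
  zify [hXle] at hnbhd hsplit ⊢
  have := mul_le_mul_of_nonneg_left hnbhd (Int.natCast_nonneg t)
  linarith

theorem exists_injective_adj_of_mul_card_le {X Y : Finset V} {t : ℕ}
    (hall : ∀ X' ⊆ X, t * #X' ≤ #(G.nbhd X' ∩ Y)) :
    ∃ g : X × Fin t → V, Function.Injective g ∧ ∀ p, G.Adj p.1 (g p) ∧ g p ∈ Y := by
  obtain ⟨g, hg, hgY⟩ := (all_card_le_biUnion_card_iff_exists_injective
    fun p : X × Fin t => G.neighborFinset p.1 ∩ Y).mp fun s => by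
      set X' := s.image fun p => (p.1 : V)
      have hbUnion : s.biUnion (fun p : X × Fin t => G.neighborFinset p.1 ∩ Y) =
          G.nbhd X' ∩ Y := by
        ext v
        simp only [mem_biUnion, mem_inter, mem_neighborFinset, mem_nbhd, mem_image, X']
        aesop
      have hinjOn : Set.InjOn (fun p : X × Fin t => ((p.1 : V), p.2)) s := fun p _ q _ h => by
        simp only [Prod.mk.injEq] at h
        exact Prod.ext (Subtype.ext h.1) h.2
      calc #s ≤ #(X' ×ˢ (univ : Finset (Fin t))) :=
            card_le_card_of_injOn _ (fun p hp => by simpa [X'] using ⟨p.2, hp⟩) hinjOn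
        _ = t * #X' := by rw [card_product, card_univ, Fintype.card_fin, mul_comm]
        _ ≤ #(G.nbhd X' ∩ Y) := hall X' fun v => by simp +contextual [X']
        _ = _ := by rw [hbUnion]
  exact ⟨g, hg, fun p => by simpa using hgY p⟩

theorem exists_isExpansion {t : ℕ} {X Y : Finset V} (hXY : Disjoint X Y)
    (hall : ∀ X' ⊆ X, t * #X' ≤ #(G.nbhd X' ∩ Y)) :
    ∃ M, IsExpansion G t X Y M :=
  have ⟨_, hg, hgadj⟩ := exists_injective_adj_of_mul_card_le hall
  ⟨_, isExpansion_range_of_injective hXY hg hgadj⟩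

theorem exists_mul_card_nbhd_lt_card_of_surplus_le {S : Finset V} (hind : G.IsIndepSet S)
    {t ℓ : ℕ} (hℓ : ∀ M, IsEdgeMatching G M → M.ncard ≤ ℓ) (hS : ℓ * t < #S) :
    ∃ Y ⊆ S, t * #(G.nbhd Y) < #Y ∧ ∀ Y' ⊆ Y, G.surplus t Y' ≤ G.surplus t Y := by
  obtain ⟨Y₀, hY₀S, hY₀⟩ := exists_mul_card_nbhd_lt_card hind hℓ hS
  obtain ⟨Y, hYS, hYmax⟩ := S.powerset.exists_max_image (G.surplus t)
    ⟨Y₀, mem_powerset.mpr hY₀S⟩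
  rw [mem_powerset] at hYS
  refine ⟨Y, hYS, ?_, fun Y' hY' => hYmax Y' (mem_powerset.mpr (hY'.trans hYS))⟩
  have := hYmax Y₀ (mem_powerset.mpr hY₀S)
  unfold surplus at this
  lia

theorem exists_isExpansion_nbhd_not_saturates {S : Finset V} (hind : G.IsIndepSet S)
    {t ℓ : ℕ} (hℓ : ∀ M, IsEdgeMatching G M → M.ncard ≤ ℓ) (hS : ℓ * t < #S) :
    ∃ Y ⊆ S, ∃ M w, IsExpansion G t (G.nbhd Y) Y M ∧ w ∈ Y ∧ ¬ Saturates M w := by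
  obtain ⟨Y, hYS, hYpos, hYmax⟩ := exists_mul_card_nbhd_lt_card_of_surplus_le hind hℓ hS
  have hdisj : Disjoint (G.nbhd Y) Y := Finset.disjoint_left.mpr fun x hx hxY => by
    obtain ⟨y, hy, hyx⟩ := mem_nbhd.mp hx
    exact hind (hYS hy) (hYS hxY) hyx.ne hyx
  obtain ⟨M, hM⟩ := exists_isExpansion hdisj fun X' hX' => mul_card_le_card_nbhd_inter hYmax hX'
  obtain ⟨w, hwY, hw⟩ := hM.exists_not_saturates Y.finite_toSet (by simpa using hYpos)
  exact ⟨Y, hYS, M, w, hM, hwY, hw⟩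

end SimpleGraph

theorem stmt5_general {V : Type} [Fintype V] (G : SimpleGraph V) (P Q : Set V)
    (hpart : P ∪ Q = Set.univ ∧ P ∩ Q = ∅)
    (hbip : ∀ u v : V, G.Adj u v → (u ∈ P ∧ v ∈ Q) ∨ (u ∈ Q ∧ v ∈ P))
    (t ℓ : ℕ)
    (hmaxmat : (∃ M : Set (Sym2 V), IsEdgeMatching G M ∧ M.ncard = ℓ) ∧
      ∀ M : Set (Sym2 V), IsEdgeMatching G M → M.ncard ≤ ℓ)
    (hQ : ℓ * t < Q.ncard)
    (hiso : ∀ q ∈ Q, ∃ u : V, G.Adj q u) :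
    ∃ (X Y : Set V) (w : V) (M : Set (Sym2 V)),
      X ⊆ P ∧ Y ⊆ Q ∧ X.Nonempty ∧ Y.Nonempty ∧ w ∈ Y ∧
      IsExpansion G t X Y M ∧
      (∀ y ∈ Y, ∀ z : V, G.Adj y z → z ∈ X) ∧
      ¬ Saturates M w := by
  classical
  have hPQ : ∀ v ∈ P, v ∉ Q := fun v hvP hvQ => (hpart.2.subset ⟨hvP, hvQ⟩ : v ∈ (∅ : Set V))
  have hnbhdP : ∀ q ∈ Q, ∀ v, G.Adj q v → v ∈ P := fun q hq v hqv => by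
    rcases hbip q v hqv with ⟨hqP, -⟩ | ⟨-, hvP⟩
    exacts [absurd hq (hPQ q hqP), hvP]
  have hind : G.IsIndepSet (Q.toFinset : Set V) := fun q hq q' hq' _ hqq' => by
    simp only [Set.coe_toFinset] at hq hq'
    exact hPQ q' (hnbhdP q hq q' hqq') hq'
  obtain ⟨Y, hYQ, M, w, hM, hwY, hw⟩ := exists_isExpansion_nbhd_not_saturates hind hmaxmat.2
    (by rwa [Set.ncard_eq_toFinset_card'] at hQ)
  have hYQ' : (Y : Set V) ⊆ Q := fun y hy => by simpa using hYQ hy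
  obtain ⟨u, hwu⟩ := hiso w (hYQ' hwY)
  refine ⟨G.nbhd Y, Y, w, M, fun x hx => ?_, hYQ', ⟨u, mem_nbhd.mpr ⟨w, hwY, hwu⟩⟩, ⟨w, hwY⟩,
    hwY, hM, fun y hy z hyz => mem_nbhd.mpr ⟨y, hy, hyz⟩, hw⟩
  obtain ⟨y, hy, hyx⟩ := mem_nbhd.mp hx
  exact hnbhdP y (hYQ' hy) x hyx

/-- expansion lemma with an unsaturated vertex. -/
theorem stmt5 {V : Type} [Fintype V] (G : SimpleGraph V) (P Q : Set V)
    (hpart : P ∪ Q = Set.univ ∧ P ∩ Q = ∅)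
    (hbip : ∀ u v : V, G.Adj u v → (u ∈ P ∧ v ∈ Q) ∨ (u ∈ Q ∧ v ∈ P))
    (t ℓ : ℕ) (ht : 0 < t)
    (hmaxmat : (∃ M : Set (Sym2 V), IsEdgeMatching G M ∧ M.ncard = ℓ) ∧
      ∀ M : Set (Sym2 V), IsEdgeMatching G M → M.ncard ≤ ℓ)
    (hQ : ℓ * t < Q.ncard)
    (hiso : ∀ q ∈ Q, ∃ u : V, G.Adj q u) :
    ∃ (X Y : Set V) (w : V) (M : Set (Sym2 V)),
      X ⊆ P ∧ Y ⊆ Q ∧ X.Nonempty ∧ Y.Nonempty ∧ w ∈ Y ∧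
      IsExpansion G t X Y M ∧
      (∀ y ∈ Y, ∀ z : V, G.Adj y z → z ∈ X) ∧
      ¬ Saturates M w :=
  stmt5_general G P Q hpart hbip t ℓ hmaxmat hQ hiso
end

section
/- Let G be a chordal graph with terminal set T ⊆ V(G) such that G has no bridges, no connected component of G is a clique, and every vertex of G not in T has at least one neighbour in T. Then every vertex of G lies on some T-triangle. -/
open SimpleGraph

variable {V : Type*}

lemma two_le_length_of_ne {G : SimpleGraph V} {x y : V} (w : G.Walk x y) (hne : x ≠ y)
    (he : s(x,y) ∉ w.edges) : 2 ≤ w.length := by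
  match w with
  | .nil => exact absurd rfl hne
  | .cons h .nil => simp at he
  | .cons _ (.cons _ _) => simp [SimpleGraph.Walk.length_cons]

lemma shorten [DecidableEq V] {G : SimpleGraph V} {b a x y : V} (p : G.Walk b a)
    (hp : p.IsPath) (hx : x ∈ p.support) (hy : y ∈ (p.dropUntil x hx).support)
    (hxy : G.Adj x y) (hch : s(x,y) ∉ p.edges) :
    ∃ q : G.Walk b a, q.length < p.length ∧ ∀ e ∈ q.edges, e = s(x,y) ∨ e ∈ p.edges := by
  set p1 := p.takeUntil x hx with hp1
  set p2 := p.dropUntil x hx with hp2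
  have hp2path : p2.IsPath := hp.dropUntil hx
  set p3 := p2.dropUntil y hy with hp3
  refine ⟨p1.append (Walk.cons hxy p3), ?_, ?_⟩
  · have hlen : p1.length + p2.length = p.length := by
      have := congrArg Walk.length (p.take_spec hx)
      rwa [Walk.length_append] at this
    have hlen2 : (p2.takeUntil y hy).length + p3.length = p2.length := by
      have := congrArg Walk.length (p2.take_spec hy)
      rwa [Walk.length_append] at this
    have h2 : 2 ≤ (p2.takeUntil y hy).length := by
      apply two_le_length_of_ne _ hxy.ne
      intro hmem
      exact hch (p.edges_dropUntil_subset hx (p2.edges_takeUntil_subset hy hmem))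
    rw [Walk.length_append, Walk.length_cons]
    omega
  · intro e he
    rw [Walk.edges_append, List.mem_append, Walk.edges_cons] at he
    rcases he with h1 | h1
    · exact Or.inr (p.edges_takeUntil_subset hx h1)
    · rcases List.mem_cons.mp h1 with h1 | h1
      · exact Or.inl h1
      · exact Or.inr (p.edges_dropUntil_subset hx (p2.edges_dropUntil_subset hy h1))

lemma common_nbr_aux [DecidableEq V] {G : SimpleGraph V} (hG : Chordal G) {a b : V}
    (hab : G.Adj a b) :
    ∀ n (q : G.Walk b a), q.length ≤ n → s(a,b) ∉ q.edges →
      ∃ w : V, G.Adj a w ∧ G.Adj b w := by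
  intro n
  induction n using Nat.strong_induction_on with
  | _ n ih =>
  intro q hqn hqe
  set p := q.bypass with hpdef
  have hp : p.IsPath := q.bypass_isPath
  have hpe : s(a,b) ∉ p.edges := fun h => hqe (q.edges_bypass_subset h)
  have hple : p.length ≤ q.length := q.length_bypass_le
  have h2 : 2 ≤ p.length := by
    apply two_le_length_of_ne _ hab.ne'
    rwa [Sym2.eq_swap]
  by_cases h3 : p.length ≤ 2
  · -- p has length exactly 2 : b - w - a
    match p, h2, h3, hpe with
    | .cons (v := w) h₁ (.cons h₂ .nil), _, _, _ => exact ⟨w, h₂.symm, h₁⟩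
  · push_neg at h3
    have hcyc : (Walk.cons hab p).IsCycle := (Walk.cons_isCycle_iff p hab).mpr ⟨hp, hpe⟩
    obtain ⟨x, y, hx, hy, hxy, hch⟩ := hG a (Walk.cons hab p) hcyc (by
      rw [Walk.length_cons]; omega)
    rw [Walk.support_cons, List.mem_cons] at hx hy
    have hx' : x ∈ p.support := by
      rcases hx with rfl | hx
      · exact p.end_mem_support
      · exact hx
    have hy' : y ∈ p.support := by
      rcases hy with rfl | hy
      · exact p.end_mem_support
      · exact hy
    rw [Walk.edges_cons, List.mem_cons] at hch
    push_neg at hch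
    obtain ⟨hchab, hchp⟩ := hch
    -- get a shorter walk from b to a avoiding s(a,b)
    have key : ∃ q' : G.Walk b a, q'.length < p.length ∧
        ∀ e ∈ q'.edges, e = s(x,y) ∨ e ∈ p.edges := by
      by_cases hyd : y ∈ (p.dropUntil x hx').support
      · exact shorten p hp hx' hyd hxy hchp
      · -- y is in the takeUntil part
        have hyt : y ∈ (p.takeUntil x hx').support := by
          have := p.take_spec hx'
          rw [← this, Walk.mem_support_append_iff] at hy'
          tauto
        set r := p.takeUntil x hx' with hr
        have hrpath : r.IsPath := hp.takeUntil hx'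
        have hxr : x ∈ (r.dropUntil y hyt).support := Walk.end_mem_support _
        have hchr : s(y,x) ∉ r.edges := by
          rw [Sym2.eq_swap]
          exact fun h => hchp (p.edges_takeUntil_subset hx' h)
        obtain ⟨q'', hq''len, hq''e⟩ := shorten r hrpath hyt hxr hxy.symm hchr
        refine ⟨q''.append (p.dropUntil x hx'), ?_, ?_⟩
        · have hlen : r.length + (p.dropUntil x hx').length = p.length := by
            have := congrArg Walk.length (p.take_spec hx')
            rwa [Walk.length_append] at this
          rw [Walk.length_append]
          omega
        · intro e he
          rw [Walk.edges_append, List.mem_append] at he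
          rcases he with he | he
          · rcases hq''e e he with h | h
            · rw [Sym2.eq_swap] at h
              exact Or.inl h
            · exact Or.inr (p.edges_takeUntil_subset hx' h)
          · exact Or.inr (p.edges_dropUntil_subset hx' he)
    obtain ⟨q', hq'len, hq'e⟩ := key
    have hq'ab : s(a,b) ∉ q'.edges := by
      intro h
      rcases hq'e _ h with h | h
      · exact hchab h.symm
      · exact hpe h
    exact ih q'.length (by omega) q' le_rfl hq'ab

lemma exists_common_nbr [DecidableEq V] {G : SimpleGraph V} (hG : Chordal G)
    (hbridge : ∀ e ∈ G.edgeSet, ¬ IsBridgeEdge G e) {a b : V} (hab : G.Adj a b) :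
    ∃ w : V, G.Adj a w ∧ G.Adj b w := by
  have hmem : s(a,b) ∈ G.edgeSet := hab
  have hnb := hbridge _ hmem
  rw [IsBridgeEdge] at hnb
  push_neg at hnb
  obtain ⟨v, c, hc, hce⟩ := hnb hmem
  have hreach : (G \ fromEdgeSet {s(a, b)}).Reachable a b :=
    (adj_and_reachable_delete_edges_iff_exists_cycle.mpr ⟨v, c, hc, hce⟩).2
  obtain ⟨p, hp⟩ := reachable_delete_edges_iff_exists_walk.mp hreach
  have hpr : s(a,b) ∉ p.reverse.edges := by
    rwa [Walk.edges_reverse, List.mem_reverse]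
  exact common_nbr_aux hG hab p.reverse.length p.reverse le_rfl hpr

lemma exists_nbr {G : SimpleGraph V}
    (hcomp : ∀ c : G.ConnectedComponent,
      ¬ G.IsClique {v : V | G.connectedComponentMk v = c}) (v : V) :
    ∃ u : V, G.Adj v u := by
  by_contra h
  push_neg at h
  apply hcomp (G.connectedComponentMk v)
  have : {w : V | G.connectedComponentMk w = G.connectedComponentMk v} = {v} := by
    ext w
    simp only [Set.mem_setOf_eq, Set.mem_singleton_iff, ConnectedComponent.eq]
    constructor
    · intro hr
      obtain ⟨q⟩ := hr.symm
      cases q with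
      | nil => rfl
      | cons h' q' => exact absurd h' (h _)
    · rintro rfl; rfl
  rw [this]
  exact G.isClique_singleton v

theorem stmt7_body {V : Type} [Fintype V] (G : SimpleGraph V) (T : Set V)
    (hG : Chordal G)
    (hbridge : ∀ e ∈ G.edgeSet, ¬ IsBridgeEdge G e)
    (hcomp : ∀ c : G.ConnectedComponent,
      ¬ G.IsClique {v : V | G.connectedComponentMk v = c})
    (hterm : ∀ v : V, v ∉ T → ∃ t ∈ T, G.Adj v t) :
    ∀ v : V, ∃ Δ : Set V, IsTTriangle G T Δ ∧ v ∈ Δ := by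
  classical
  intro v
  obtain ⟨u, hvu⟩ := exists_nbr hcomp v
  by_cases hvT : v ∈ T
  · obtain ⟨w, hvw, huw⟩ := exists_common_nbr hG hbridge hvu
    exact ⟨{v, u, w}, ⟨v, u, w, rfl, hvu, hvw, huw, Or.inl hvT⟩, by simp⟩
  · obtain ⟨t, htT, hvt⟩ := hterm v hvT
    obtain ⟨w, hvw, htw⟩ := exists_common_nbr hG hbridge hvt
    exact ⟨{v, t, w}, ⟨v, t, w, rfl, hvt, hvw, htw, Or.inr (Or.inl htT)⟩, by simp⟩

/-- under the stated conditions, every vertex lies on a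
`T`-triangle. -/
theorem stmt7 {V : Type} [Fintype V] (G : SimpleGraph V) (T : Set V)
    (hG : Chordal G)
    (hbridge : ∀ e ∈ G.edgeSet, ¬ IsBridgeEdge G e)
    (hcomp : ∀ c : G.ConnectedComponent,
      ¬ G.IsClique {v : V | G.connectedComponentMk v = c})
    (hterm : ∀ v : V, v ∉ T → ∃ t ∈ T, G.Adj v t) :
    ∀ v : V, ∃ Δ : Set V, IsTTriangle G T Δ ∧ v ∈ Δ :=
  stmt7_body G T hG hbridge hcomp hterm
end

section
/- Let G be a split graph with split partition (K, I) and terminal set T = I, let k be a nonnegative integer, and let v ∈ K. Suppose there exist k + 1 pairwise vertex-disjoint edges x₁y₁, …, x_{k+1}y_{k+1} of G such that each xᵢ ∈ K ∖ {v} and each yᵢ ∈ N(v) ∩ I. Then every subset feedback vertex set of G with respect to T of size at most k contains v. -/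
open SimpleGraph

variable {V : Type*}

lemma triangle_isCycle {G : SimpleGraph V} {a b c : V} (hab : G.Adj a b) (hbc : G.Adj b c)
    (hca : G.Adj c a) :
    ((Walk.cons hab (Walk.cons hbc (Walk.cons hca Walk.nil))) : G.Walk a a).IsCycle := by
  have hac := hca.ne'
  have hab' := hab.ne
  have hbc' := hbc.ne
  simp [Walk.isCycle_def, Walk.isTrail_def, hab.ne, hbc.ne, hca.ne, Ne.symm hac, Sym2.eq_iff]
  aesop

/-- a clique-side vertex `v` with `k+1` pairwise disjoint edges
between its independent-side neighbourhood and the rest of the clique side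
must be in every subset-FVS of size at most `k` (terminals `T = I`). -/
theorem stmt9 {V : Type} [Fintype V] (G : SimpleGraph V) (K I : Set V)
    (hsplit : IsSplitPartition G K I) (k : ℕ) (v : V) (hv : v ∈ K)
    (x y : Fin (k + 1) → V)
    (hadj : ∀ i, G.Adj (x i) (y i))
    (hx : ∀ i, x i ∈ K ∧ x i ≠ v)
    (hy : ∀ i, y i ∈ G.neighborSet v ∩ I)
    (hdisj : ∀ i j, i ≠ j →
      x i ≠ x j ∧ x i ≠ y j ∧ y i ≠ x j ∧ y i ≠ y j) :
    ∀ S : Set V, IsSubsetFVS G I S → S.ncard ≤ k → v ∈ S := by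
  intro S hS hcard
  by_contra hvS
  -- pigeonhole: some pair (x i, y i) avoids S
  have key : ∃ i, x i ∉ S ∧ y i ∉ S := by
    by_contra hno
    push_neg at hno
    have hchoice : ∀ i, ∃ z, z ∈ S ∧ (z = x i ∨ z = y i) := by
      intro i
      rcases Classical.em (x i ∈ S) with h | h
      · exact ⟨x i, h, Or.inl rfl⟩
      · exact ⟨y i, hno i h, Or.inr rfl⟩
    choose s hsS hsxy using hchoice
    have hinj : Function.Injective s := by
      intro i j hij
      by_contra hne
      obtain ⟨h1, h2, h3, h4⟩ := hdisj i j hne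
      rcases hsxy i with hi | hi <;> rcases hsxy j with hj | hj <;>
        rw [hi, hj] at hij <;> [exact h1 hij; exact h2 hij; exact h3 hij; exact h4 hij]
    have hsub : Set.range s ⊆ S := by
      rintro _ ⟨i, rfl⟩; exact hsS i
    have : (Set.range s).ncard ≤ S.ncard := Set.ncard_le_ncard hsub (Set.toFinite S)
    have hr : (Set.range s).ncard = k + 1 := by
      classical
      rw [Set.ncard_eq_toFinset_card', Set.toFinset_range,
        Finset.card_image_of_injective _ hinj]
      simp
    omega
  obtain ⟨i, hxS, hyS⟩ := key
  obtain ⟨hKI, hKIdisj, hclique, hindep⟩ := hsplit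
  have hyv : G.Adj v (y i) := (hy i).1
  have hyI : y i ∈ I := (hy i).2
  have hvx : G.Adj v (x i) := hclique hv (hx i).1 (Ne.symm (hx i).2)
  have hc := triangle_isCycle hvx (hadj i) hyv.symm
  apply hS
  refine ⟨v, _, hc, ?_, ⟨y i, hyI, ?_⟩⟩
  · intro z hz
    simp [Walk.support_cons] at hz
    rcases hz with rfl | rfl | (rfl | rfl)
    · exact hvS
    · exact hxS
    · exact hyS
    · exact hvS
  · simp [Walk.support_cons]
end

section
/- Let G be a split graph with split partition (K, I) and terminal set T = I, let k be a nonnegative integer, and let v ∈ K. Let X ⊆ K ∖ {v} and Y ⊆ N(v) ∩ I be nonempty sets and w ∈ Y a vertex such that: (i) there is a matching M in G between X and Y that saturates every vertex of X and does not saturate w, and (ii) every neighbour of a vertex of Y lies in X ∪ {v}. Let G′ = G − {vw} be the graph obtained by deleting the edge vw, and let S′ be a set of size at most k such that G′ − S′ contains no T-triangle. If v ∉ S′, then (S′ ∖ Y) ∪ X has size at most k and G′ − ((S′ ∖ Y) ∪ X) contains no T-triangle. -/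
open SimpleGraph

variable {V : Type*}

/-- replacing `S′ ∩ Y` by `X` in a triangle hitting set of
`G − vw` not containing `v` yields a triangle hitting set of size at most `k`
(terminals `T = I`). -/
theorem stmt10 {V : Type} [Fintype V] (G : SimpleGraph V) (K I : Set V)
    (hsplit : IsSplitPartition G K I) (k : ℕ) (v : V) (hv : v ∈ K)
    (X Y : Set V) (w : V) (M : Set (Sym2 V))
    (hX : X ⊆ K \ {v}) (hXne : X.Nonempty)
    (hY : Y ⊆ G.neighborSet v ∩ I) (hYne : Y.Nonempty) (hw : w ∈ Y)
    (hM : IsEdgeMatching G M)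
    (hMxy : ∀ e ∈ M, ∃ a ∈ X, ∃ b ∈ Y, e = s(a, b))
    (hMsat : ∀ a ∈ X, Saturates M a)
    (hMw : ¬ Saturates M w)
    (hNY : ∀ b ∈ Y, ∀ z : V, G.Adj b z → z ∈ X ∪ {v})
    (S' : Set V) (hS'card : S'.ncard ≤ k)
    (hS' : ¬ HasTTriangleAvoiding (G.deleteEdges {s(v, w)}) I S')
    (hvS' : v ∉ S') :
    ((S' \ Y) ∪ X).ncard ≤ k ∧
      ¬ HasTTriangleAvoiding (G.deleteEdges {s(v, w)}) I ((S' \ Y) ∪ X) := by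
  classical
  obtain ⟨huniv, hKI, hcliq, hind⟩ := hsplit
  have hKInot : ∀ x, x ∈ K → x ∈ I → False := fun x hK hI => by
    have hx : x ∈ K ∩ I := ⟨hK, hI⟩
    rw [hKI] at hx; exact hx
  have hXI : ∀ x ∈ X, x ∉ I := fun x hx hxI => hKInot x (hX hx).1 hxI
  have hXY : ∀ x ∈ X, x ∉ Y := fun x hx hxY => hXI x hx (hY hxY).2
  have hvw : v ≠ w := fun h => hKInot v hv (h ▸ (hY hw).2)
  -- key: the matched partner of an x ∈ X not in S' must be in S'
  have key : ∀ x ∈ X \ S', ∃ y, y ∈ S' ∩ Y ∧ s(x, y) ∈ M := by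
    rintro x ⟨hxX, hxS⟩
    obtain ⟨e, heM, hxe⟩ := hMsat x hxX
    obtain ⟨a, haX, b, hbY, rfl⟩ := hMxy e heM
    have hxa : x = a := by
      rcases Sym2.mem_iff.1 hxe with h | h
      · exact h
      · exact absurd (h ▸ hbY) (hXY x hxX)
    subst hxa
    have hbw : b ≠ w := by
      intro h
      exact hMw ⟨s(x, b), heM, h ▸ Sym2.mem_mk_right x b⟩
    have hxv : x ≠ v := (hX haX).2
    have hxw : x ≠ w := fun h => hXY x haX (h ▸ hw)
    have hadj_vx : (G.deleteEdges {s(v, w)}).Adj v x := by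
      rw [SimpleGraph.deleteEdges_adj]
      refine ⟨hcliq hv (hX haX).1 (Ne.symm hxv), ?_⟩
      simp only [Set.mem_singleton_iff, Sym2.eq_iff]
      push_neg
      exact ⟨fun _ => hxw, fun h => absurd h hvw⟩
    have hadj_vb : (G.deleteEdges {s(v, w)}).Adj v b := by
      rw [SimpleGraph.deleteEdges_adj]
      refine ⟨(hY hbY).1, ?_⟩
      simp only [Set.mem_singleton_iff, Sym2.eq_iff]
      push_neg
      exact ⟨fun _ => hbw, fun h => absurd h hvw⟩
    have hadj_xb : (G.deleteEdges {s(v, w)}).Adj x b := by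
      rw [SimpleGraph.deleteEdges_adj]
      refine ⟨(SimpleGraph.mem_edgeSet G).1 (hM.1 heM), ?_⟩
      simp only [Set.mem_singleton_iff, Sym2.eq_iff]
      push_neg
      exact ⟨fun h => absurd h hxv, fun h => absurd h hxw⟩
    by_contra hcon
    push_neg at hcon
    have hbS : b ∉ S' := fun h => hcon b ⟨h, hbY⟩ heM
    apply hS'
    refine ⟨{v, x, b}, ⟨v, x, b, rfl, hadj_vx, hadj_vb, hadj_xb,
      Or.inr (Or.inr (hY hbY).2)⟩, ?_⟩
    rw [Set.eq_empty_iff_forall_notMem]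
    rintro z ⟨hz, hzS⟩
    rcases hz with rfl | rfl | rfl
    · exact hvS' hzS
    · exact hxS hzS
    · exact hbS hzS
  choose f hf using key
  -- cardinality bound
  have hXcard : (X \ S').ncard ≤ (S' ∩ Y).ncard := by
    have := Set.toFinite (S' ∩ Y)
    apply Set.ncard_le_ncard_of_injOn
      (fun x => if h : x ∈ X \ S' then f x h else x)
    · intro x hx
      simp only [dif_pos hx]
      exact (hf x hx).1
    · intro x1 h1 x2 h2 heq
      simp only [dif_pos h1, dif_pos h2] at heq
      by_contra hne
      have hy1 := (hf x1 h1).2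
      have hy2 := (hf x2 h2).2
      rw [heq] at hy1
      have hedne : s(x1, f x2 h2) ≠ s(x2, f x2 h2) := by
        intro h
        rcases Sym2.eq_iff.1 h with ⟨h', _⟩ | ⟨h', _⟩
        · exact hne h'
        · exact hXY x1 h1.1 (by rw [h']; exact ((hf x2 h2).1).2)
      exact hM.2 _ hy1 _ hy2 hedne _ (Sym2.mem_mk_right x1 _)
        (Sym2.mem_mk_right x2 _)
  have hunion : (S' \ Y) ∪ X = (S' \ Y) ∪ (X \ S') := by
    ext z
    simp only [Set.mem_union, Set.mem_diff]
    constructor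
    · rintro (h | hz)
      · exact Or.inl h
      · by_cases hzS : z ∈ S'
        · exact Or.inl ⟨hzS, hXY z hz⟩
        · exact Or.inr ⟨hz, hzS⟩
    · rintro (h | ⟨h1, _⟩)
      · exact Or.inl h
      · exact Or.inr h1
  have hdisj : Disjoint (S' \ Y) (X \ S') := by
    rw [Set.disjoint_left]
    rintro z ⟨hz, _⟩ ⟨_, hz'⟩
    exact hz' hz
  have hcard : ((S' \ Y) ∪ X).ncard ≤ k := by
    rw [hunion, Set.ncard_union_eq hdisj (Set.toFinite _) (Set.toFinite _)]
    calc (S' \ Y).ncard + (X \ S').ncard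
        ≤ (S' \ Y).ncard + (S' ∩ Y).ncard := by omega
      _ = S'.ncard := by
          have hd2 : Disjoint (S' \ Y) (S' ∩ Y) := by
            rw [Set.disjoint_left]
            rintro z ⟨_, hz⟩ ⟨_, hz'⟩
            exact hz hz'
          rw [← Set.ncard_union_eq hd2 (Set.toFinite _) (Set.toFinite _),
            Set.diff_union_inter]
      _ ≤ k := hS'card
  refine ⟨hcard, ?_⟩
  -- no T-triangle avoiding the new set
  rintro ⟨Δ, ⟨a, b, c, rfl, hab, hac, hbc, hT⟩, hdis⟩
  have havoid : ∀ z ∈ ({a, b, c} : Set V), z ∉ (S' \ Y) ∪ X := by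
    intro z hz hzin
    rw [Set.eq_empty_iff_forall_notMem] at hdis
    exact hdis z ⟨hz, hzin⟩
  have haX : a ∉ X := fun h => havoid a (by simp) (Or.inr h)
  have hbX : b ∉ X := fun h => havoid b (by simp) (Or.inr h)
  have hcX : c ∉ X := fun h => havoid c (by simp) (Or.inr h)
  -- S' hits this triangle
  have hz : ∃ z ∈ ({a, b, c} : Set V), z ∈ S' := by
    by_contra hcon
    push_neg at hcon
    apply hS'
    refine ⟨{a, b, c}, ⟨a, b, c, rfl, hab, hac, hbc, hT⟩, ?_⟩
    rw [Set.eq_empty_iff_forall_notMem]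
    rintro z ⟨hz1, hz2⟩
    exact hcon z hz1 hz2
  obtain ⟨z, hzmem, hzS⟩ := hz
  have hzY : z ∈ Y := by
    by_contra hzY
    exact havoid z hzmem (Or.inl ⟨hzS, hzY⟩)
  -- the other two triangle vertices are neighbours of z, hence in X ∪ {v}
  have step : ∀ p q : V, (G.deleteEdges {s(v, w)}).Adj z p →
      (G.deleteEdges {s(v, w)}).Adj z q →
      (G.deleteEdges {s(v, w)}).Adj p q → p ∉ X → q ∉ X → False := by
    intro p q hzp hzq hpq hpX hqX
    have hp := hNY z hzY p (SimpleGraph.deleteEdges_adj.mp hzp).1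
    have hq := hNY z hzY q (SimpleGraph.deleteEdges_adj.mp hzq).1
    rcases hp with hp | hp
    · exact hpX hp
    rcases hq with hq | hq
    · exact hqX hq
    rw [Set.mem_singleton_iff] at hp hq
    exact hpq.ne (hp.trans hq.symm)
  rcases hzmem with rfl | rfl | rfl
  · exact step b c hab hac hbc hbX hcX
  · exact step a c hab.symm hbc hac haX hcX
  · exact step a b hac.symm hbc.symm hab haX hbX
end

section
/- Let G be a split graph with split partition (K, I) and terminal set T = I, and let k be a nonnegative integer. Let X ⊆ I and Y ⊆ K be nonempty sets such that: (i) there is a 2-expansion M of X into Y, and (ii) for every y ∈ Y, every neighbour of y that lies in I belongs to X. If S ⊆ V(G) has size at most k and G − S contains no T-triangle, then (S ∖ Y) ∪ X has size at most k and G − ((S ∖ Y) ∪ X) contains no T-triangle. -/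
open SimpleGraph

variable {V : Type*}

set_option maxHeartbeats 1000000 in
/-- replacing `S ∩ Y` by `X` using a 2-expansion of `X ⊆ I`
into `Y ⊆ K` yields a triangle hitting set of size at most `k`
(terminals `T = I`). -/
theorem stmt11 {V : Type} [Fintype V] (G : SimpleGraph V) (K I : Set V)
    (hsplit : IsSplitPartition G K I) (k : ℕ)
    (X Y : Set V) (M : Set (Sym2 V))
    (hX : X ⊆ I) (hXne : X.Nonempty) (hY : Y ⊆ K) (hYne : Y.Nonempty)
    (hexp : IsExpansion G 2 X Y M)
    (hNY : ∀ b ∈ Y, ∀ z : V, G.Adj b z → z ∈ I → z ∈ X)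
    (S : Set V) (hScard : S.ncard ≤ k)
    (hS : ¬ HasTTriangleAvoiding G I S) :
    ((S \ Y) ∪ X).ncard ≤ k ∧
      ¬ HasTTriangleAvoiding G I ((S \ Y) ∪ X) := by
  classical
  obtain ⟨hKI, hKIdisj, hKclique, hIindep⟩ := hsplit
  obtain ⟨hMsub, hMend, hdeg, hsat⟩ := hexp
  have hXY : ∀ ⦃v : V⦄, v ∈ X → v ∉ Y := by
    intro v hvX hvY
    have : v ∈ K ∩ I := ⟨hY hvY, hX hvX⟩
    rw [hKIdisj] at this; exact this
  -- unique Y endpoint of each edge of M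
  have hYuniq : ∀ e ∈ M, ∀ y1 ∈ Y, y1 ∈ e → ∀ y2 ∈ Y, y2 ∈ e → y1 = y2 := by
    intro e he y1 hy1 hy1e y2 hy2 hy2e
    obtain ⟨x, hx, y, hy, rfl⟩ := hMend e he
    rw [Sym2.mem_iff] at hy1e hy2e
    rcases hy1e with rfl | rfl
    · exact absurd hy1 (hXY hx)
    · rcases hy2e with rfl | rfl
      · exact absurd hy2 (hXY hx)
      · rfl
  set fx : V → Set V := fun x => {y ∈ Y | s(x, y) ∈ M} with hfxdef
  set E : V → Set (Sym2 V) := fun x => {e ∈ M | x ∈ e} with hEdef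
  -- Step A : each x ∈ X has exactly two partners
  have hfx : ∀ x ∈ X, (fx x).ncard = 2 := by
    intro x hx
    have himg : E x = (fun y => s(x, y)) '' (fx x) := by
      ext e
      constructor
      · rintro ⟨heM, hxe⟩
        obtain ⟨x', hx', y, hy, rfl⟩ := hMend e heM
        rw [Sym2.mem_iff] at hxe
        rcases hxe with rfl | rfl
        · exact ⟨y, ⟨hy, heM⟩, rfl⟩
        · exact absurd hy (hXY hx)
      · rintro ⟨y, ⟨hy, hyM⟩, rfl⟩
        exact ⟨hyM, by rw [Sym2.mem_iff]; left; rfl⟩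
    have hinj : Set.InjOn (fun y => s(x, y)) (fx x) := by
      intro y1 h1 y2 h2 heq
      simp only [Sym2.eq_iff] at heq
      rcases heq with ⟨_, h⟩ | ⟨h1', _⟩
      · exact h
      · exact absurd (h1' ▸ h2.1) (hXY hx)
    have hd := hdeg x hx
    rw [show {e ∈ M | x ∈ e} = E x from rfl, himg,
      Set.ncard_image_of_injOn hinj] at hd
    exact hd
  -- Step B : |M| ≤ 2|X|
  have hMfin : M.Finite := Set.toFinite M
  have hXfin : X.Finite := Set.toFinite X
  have hMcard : M.ncard ≤ 2 * X.ncard := by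
    have hsub : hMfin.toFinset ⊆
        hXfin.toFinset.biUnion (fun x => (Set.toFinite (E x)).toFinset) := by
      intro e he
      simp only [Set.Finite.mem_toFinset] at he
      obtain ⟨x, hx, y, hy, rfl⟩ := hMend e he
      simp only [Finset.mem_biUnion, Set.Finite.mem_toFinset]
      exact ⟨x, hx, he, by rw [Sym2.mem_iff]; left; rfl⟩
    calc M.ncard = hMfin.toFinset.card := Set.ncard_eq_toFinset_card _ hMfin
      _ ≤ (hXfin.toFinset.biUnion (fun x => (Set.toFinite (E x)).toFinset)).card :=
          Finset.card_le_card hsub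
      _ ≤ ∑ x ∈ hXfin.toFinset, (Set.toFinite (E x)).toFinset.card :=
          Finset.card_biUnion_le
      _ = ∑ x ∈ hXfin.toFinset, 2 := by
          apply Finset.sum_congr rfl
          intro x hx
          rw [← Set.ncard_eq_toFinset_card _ (Set.toFinite (E x))]
          exact hdeg x (by simpa using hx)
      _ = 2 * X.ncard := by
          rw [Finset.sum_const, smul_eq_mul, mul_comm,
            ← Set.ncard_eq_toFinset_card _ hXfin]
  -- choice of a saturating edge
  set χ : V → Sym2 V := fun y' =>
    if h : Saturates M y' then h.choose else s(y', y') with hχdef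
  have hχspec : ∀ y', Saturates M y' → χ y' ∈ M ∧ y' ∈ χ y' := by
    intro y' h
    simp only [hχdef, dif_pos h]
    exact h.choose_spec
  set Ysat : Set V := {y ∈ Y | Saturates M y} with hYsatdef
  -- Step C : each saturated vertex of Y lies in a unique edge
  have huniq : ∀ y ∈ Y, ∀ e1 ∈ M, ∀ e2 ∈ M, y ∈ e1 → y ∈ e2 → e1 = e2 := by
    intro y hyY e1 he1 e2 he2 hy1 hy2
    by_contra hne
    have hysat : Saturates M y := ⟨e1, he1, hy1⟩
    set ebad : Sym2 V := if χ y = e1 then e2 else e1 with hebaddef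
    have hbadM : ebad ∈ M := by
      rw [hebaddef]; split <;> assumption
    have hybad : y ∈ ebad := by
      rw [hebaddef]; split <;> assumption
    have hbadne : χ y ≠ ebad := by
      rw [hebaddef]; split
      · rename_i hc; intro h; exact hne (hc ▸ h)
      · assumption
    have hmaps : ∀ z ∈ Ysat, χ z ∈ M \ {ebad} := by
      rintro z ⟨hzY, hzsat⟩
      obtain ⟨hzM, hzmem⟩ := hχspec z hzsat
      refine ⟨hzM, ?_⟩
      intro hzeq
      simp only [Set.mem_singleton_iff] at hzeq
      have : z = y := hYuniq ebad hbadM z hzY (hzeq ▸ hzmem) y hyY hybad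
      exact hbadne (this ▸ hzeq)
    have hinj : Set.InjOn χ Ysat := by
      rintro z1 ⟨hz1Y, hz1s⟩ z2 ⟨hz2Y, hz2s⟩ heq
      obtain ⟨h1M, h1m⟩ := hχspec z1 hz1s
      obtain ⟨h2M, h2m⟩ := hχspec z2 hz2s
      exact hYuniq (χ z1) h1M z1 hz1Y h1m z2 hz2Y (heq ▸ h2m)
    have hle : Ysat.ncard ≤ (M \ {ebad}).ncard :=
      Set.ncard_le_ncard_of_injOn χ hmaps hinj (Set.toFinite _)
    have hdiff : (M \ {ebad}).ncard + 1 = M.ncard :=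
      Set.ncard_diff_singleton_add_one hbadM hMfin
    have hXpos : 0 < X.ncard := (Set.ncard_pos (Set.toFinite X)).mpr hXne
    have hYsatcard : Ysat.ncard = 2 * X.ncard := hsat
    omega
  -- Step D : a vertex of Y determines its partner in X
  have hxuniq : ∀ y ∈ Y, ∀ x1 ∈ X, ∀ x2 ∈ X,
      s(x1, y) ∈ M → s(x2, y) ∈ M → x1 = x2 := by
    intro y hy x1 hx1 x2 hx2 h1 h2
    have heq := huniq y hy _ h1 _ h2 (by rw [Sym2.mem_iff]; right; rfl)
      (by rw [Sym2.mem_iff]; right; rfl)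
    rw [Sym2.eq_iff] at heq
    rcases heq with ⟨h, _⟩ | ⟨h1', _⟩
    · exact h
    · exact absurd (h1' ▸ hy) (hXY hx1)
  -- Step E : each x ∈ X \ S has a partner in S ∩ Y
  have hpick : ∀ x ∈ X \ S, ∃ y, y ∈ S ∩ Y ∧ s(x, y) ∈ M := by
    rintro x ⟨hxX, hxS⟩
    obtain ⟨y1, y2, hne, hpair⟩ := Set.ncard_eq_two.mp (hfx x hxX)
    have hy1 : y1 ∈ fx x := by rw [hpair]; left; rfl
    have hy2 : y2 ∈ fx x := by rw [hpair]; right; rfl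
    have hadj1 : G.Adj x y1 := (G.mem_edgeSet).mp (hMsub hy1.2)
    have hadj2 : G.Adj x y2 := (G.mem_edgeSet).mp (hMsub hy2.2)
    have hadj12 : G.Adj y1 y2 := hKclique (hY hy1.1) (hY hy2.1) hne
    have htri : IsTTriangle G I {x, y1, y2} :=
      ⟨x, y1, y2, rfl, hadj1, hadj2, hadj12, Or.inl (hX hxX)⟩
    have hhit : ¬({x, y1, y2} ∩ S = ∅) := fun h => hS ⟨_, htri, h⟩
    rw [Set.eq_empty_iff_forall_notMem] at hhit
    push_neg at hhit
    obtain ⟨v, hvmem, hvS⟩ := hhit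
    simp only [Set.mem_insert_iff, Set.mem_singleton_iff] at hvmem
    rcases hvmem with h | h | h
    · exact absurd (h ▸ hvS) hxS
    · exact ⟨y1, ⟨h ▸ hvS, hy1.1⟩, hy1.2⟩
    · exact ⟨y2, ⟨h ▸ hvS, hy2.1⟩, hy2.2⟩
  -- Step F : injection from X \ S into S ∩ Y
  set g : V → V := fun x =>
    if h : ∃ y, y ∈ S ∩ Y ∧ s(x, y) ∈ M then h.choose else x with hgdef
  have hgspec : ∀ x ∈ X \ S, g x ∈ S ∩ Y ∧ s(x, g x) ∈ M := by
    intro x hx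
    have h := hpick x hx
    simp only [hgdef, dif_pos h]
    exact h.choose_spec
  have hXS_le : (X \ S).ncard ≤ (S ∩ Y).ncard := by
    apply Set.ncard_le_ncard_of_injOn g (fun x hx => (hgspec x hx).1)
    · intro x1 h1 x2 h2 heq
      obtain ⟨⟨_, hgY⟩, hM1⟩ := hgspec x1 h1
      obtain ⟨_, hM2⟩ := hgspec x2 h2
      exact hxuniq (g x1) hgY x1 h1.1 x2 h2.1 hM1 (heq ▸ hM2)
  -- cardinality conclusion
  have hcard : ((S \ Y) ∪ X).ncard ≤ k := by
    have h1 : (S \ Y) ∪ X = (S \ Y) ∪ (X \ S) := by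
      ext v
      constructor
      · rintro (h | h)
        · exact Or.inl h
        · by_cases hvS : v ∈ S
          · exact Or.inl ⟨hvS, hXY h⟩
          · exact Or.inr ⟨h, hvS⟩
      · rintro (h | h)
        · exact Or.inl h
        · exact Or.inr h.1
    have hdisj1 : Disjoint (S \ Y) (X \ S) := by
      rw [Set.disjoint_left]; rintro v ⟨hvS, _⟩ ⟨_, hv⟩; exact hv hvS
    have hdisj2 : Disjoint (S \ Y) (S ∩ Y) := by
      rw [Set.disjoint_left]; rintro v ⟨_, hv⟩ ⟨_, hvY⟩; exact hv hvY
    have h2 : (S \ Y) ∪ (S ∩ Y) = S := Set.diff_union_inter S Y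
    have h3 : (S \ Y).ncard + (S ∩ Y).ncard = S.ncard := by
      rw [← Set.ncard_union_eq hdisj2 (Set.toFinite _) (Set.toFinite _), h2]
    rw [h1, Set.ncard_union_eq hdisj1 (Set.toFinite _) (Set.toFinite _)]
    omega
  refine ⟨hcard, ?_⟩
  -- the new set still hits all T-triangles
  rintro ⟨Δ, ⟨a, b, c, rfl, hab, hac, hbc, hT⟩, hΔ⟩
  apply hS
  refine ⟨{a, b, c}, ⟨a, b, c, rfl, hab, hac, hbc, hT⟩, ?_⟩
  have hnotin : ∀ v ∈ ({a, b, c} : Set V), v ∉ (S \ Y) ∪ X := by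
    intro v hv hvmem
    have : v ∈ ({a, b, c} : Set V) ∩ ((S \ Y) ∪ X) := ⟨hv, hvmem⟩
    rw [hΔ] at this; exact this
  rw [Set.eq_empty_iff_forall_notMem]
  rintro v ⟨hv, hvS⟩
  have hvY : v ∈ Y := by
    by_contra h
    exact hnotin v hv (Or.inl ⟨hvS, h⟩)
  obtain ⟨t, ht, htI⟩ : ∃ t ∈ ({a, b, c} : Set V), t ∈ I := by
    rcases hT with h | h | h
    · exact ⟨a, by simp, h⟩
    · exact ⟨b, by simp, h⟩
    · exact ⟨c, by simp, h⟩
  have htv : t ≠ v := by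
    rintro rfl
    have : t ∈ K ∩ I := ⟨hY hvY, htI⟩
    rw [hKIdisj] at this; exact this
  have hadjvt : G.Adj v t := by
    simp only [Set.mem_insert_iff, Set.mem_singleton_iff] at hv ht
    rcases hv with rfl | rfl | rfl <;> rcases ht with rfl | rfl | rfl <;>
      first
        | exact absurd rfl htv
        | exact hab | exact hab.symm | exact hac | exact hac.symm
        | exact hbc | exact hbc.symm
  have htX : t ∈ X := hNY v hvY t hadjvt htI
  exact hnotin t ht (Or.inr htX)
end

section
/- Let G be a chordal graph with terminal set T ⊆ V(G), and let S be a minimal subset feedback vertex set of G with respect to T, i.e., S is a subset-FVS and no proper subset of S is a subset-FVS. Let v ∈ S with v ∉ T, and suppose there exists a clique Q of G such that every T-triangle of G containing v has all its vertices in Q. Then there is exactly one T-triangle Δ of G such that Δ ∩ S = {v}. -/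
/-!
In a chordal graph a cycle through a vertex `t` is either a triangle or has a chord, and
splitting it along the chord leaves a shorter cycle through `t` on the same vertices; so
`G − S` contains a `T`-cycle iff it contains a `T`-triangle. By minimality `G − (S \ {v})`
contains a `T`-triangle, which then meets `S` exactly in `v`. If `Δ₁ ≠ Δ₂` were two such
triangles, both lie in the clique `Q`, and a terminal `t` of `Δ₁`, the third vertex `u` of `Δ₁`,
and a vertex `w ∈ Δ₂ \ Δ₁` would form a `T`-triangle avoiding `S`.
-/

open SimpleGraph

variable {V : Type*}

namespace SimpleGraph.Walk

variable {G : SimpleGraph V} [DecidableEq V]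

lemma IsCycle.exists_shorter_of_chord_at_start {x y z : V} {c : G.Walk x x}
    (hc : c.IsCycle) (hy : y ∈ c.support) (hxy : G.Adj x y) (hch : s(x, y) ∉ c.edges)
    (hz : z ∈ c.support) :
    ∃ (w : V) (d : G.Walk w w), d.IsCycle ∧ d.length < c.length ∧ z ∈ d.support ∧
      ∀ a ∈ d.support, a ∈ c.support := by
  set p := c.takeUntil y hy
  set q := c.dropUntil y hy
  have hpq : p.append q = c := c.take_spec hy
  have hp : p.IsPath := hc.isPath_takeUntil hy
  have hq : q.IsPath := (hpq ▸ hc).isPath_of_append_right (not_nil_of_ne hxy.ne)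
  have hpc : (cons hxy.symm p).IsCycle := by
    refine (cons_isCycle_iff _ _).mpr ⟨hp, fun he => hch ?_⟩
    exact Sym2.eq_swap ▸ c.edges_takeUntil_subset_edges hy he
  have hqc : (cons hxy q).IsCycle :=
    (cons_isCycle_iff _ _).mpr ⟨hq, fun he => hch (c.edges_dropUntil_subset_edges hy he)⟩
  have hlen : p.length + q.length = c.length := by rw [← hpq, length_append]
  have hp3 := hpc.three_le_length
  have hq3 := hqc.three_le_length
  simp only [length_cons] at hp3 hq3
  rw [← hpq, mem_support_append_iff] at hz
  rcases hz with hz | hz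
  · refine ⟨y, _, hpc, by simp only [length_cons]; omega, by simp [hz], fun a ha => ?_⟩
    rw [support_cons, List.mem_cons] at ha
    rcases ha with rfl | ha
    · exact hy
    · exact c.support_takeUntil_subset_support hy ha
  · refine ⟨x, _, hqc, by simp only [length_cons]; omega, by simp [hz], fun a ha => ?_⟩
    rw [support_cons, List.mem_cons] at ha
    rcases ha with rfl | ha
    · exact c.start_mem_support
    · exact c.support_dropUntil_subset_support hy ha

lemma IsCycle.exists_shorter_of_chord {u x y z : V} {c : G.Walk u u} (hc : c.IsCycle)
    (hx : x ∈ c.support) (hy : y ∈ c.support) (hxy : G.Adj x y) (hch : s(x, y) ∉ c.edges)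
    (hz : z ∈ c.support) :
    ∃ d : G.Walk z z, d.IsCycle ∧ d.length < c.length ∧ ∀ a ∈ d.support, a ∈ c.support := by
  obtain ⟨w, d, hd, hlen, hzd, hsub⟩ := (hc.rotate hx).exists_shorter_of_chord_at_start
    ((c.mem_support_rotate_iff x hx).mpr hy) hxy
    (fun he => hch ((c.rotate_edges x hx).perm.mem_iff.mp he))
    ((c.mem_support_rotate_iff x hx).mpr hz)
  refine ⟨d.rotate z hzd, hd.rotate hzd, by simpa using hlen, fun a ha => ?_⟩
  exact (c.mem_support_rotate_iff x hx).mp (hsub a ((d.mem_support_rotate_iff z hzd).mp ha))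

end SimpleGraph.Walk

section

variable {G : SimpleGraph V} {T S : Set V}

lemma Chordal.exists_adj_adj_of_isCycle (hG : Chordal G) {t : V} (c : G.Walk t t)
    (hc : c.IsCycle) :
    ∃ a b, a ∈ c.support ∧ b ∈ c.support ∧ G.Adj t a ∧ G.Adj t b ∧ G.Adj a b := by
  classical
  induction hn : c.length using Nat.strong_induction_on generalizing c with
  | _ n ih =>
    by_cases h4 : 4 ≤ c.length
    · obtain ⟨x, y, hx, hy, hxy, hch⟩ := hG t c hc h4
      obtain ⟨d, hd, hlen, hsub⟩ := hc.exists_shorter_of_chord hx hy hxy hch c.start_mem_support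
      obtain ⟨a, b, ha, hb, hta, htb, hab⟩ := ih _ (hn ▸ hlen) d hd rfl
      exact ⟨a, b, hsub a ha, hsub b hb, hta, htb, hab⟩
    · have h3 : c.length = 3 := by have := hc.three_le_length; omega
      refine ⟨c.getVert 1, c.getVert 2, c.getVert_mem_support 1, c.getVert_mem_support 2, ?_, ?_,
        c.adj_getVert_succ (by omega)⟩
      · simpa using c.adj_getVert_succ (i := 0) (by omega)
      · have h23 := c.adj_getVert_succ (i := 2) (by omega)
        rwa [show 2 + 1 = c.length by omega, Walk.getVert_length, adj_comm] at h23

lemma IsTTriangle.exists_terminal_of_mem {Δ : Set V} (hΔ : IsTTriangle G T Δ) {v : V}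
    (hv : v ∈ Δ) (hvT : v ∉ T) :
    ∃ t u : V, t ∈ T ∧ t ∈ Δ ∧ u ∈ Δ ∧ t ≠ u ∧ t ≠ v ∧ u ≠ v := by
  obtain ⟨a, b, c, rfl, hab, hac, hbc, hT⟩ := hΔ
  simp only [Set.mem_insert_iff, Set.mem_singleton_iff] at hv
  rcases hv with rfl | rfl | rfl <;> rcases hT with h | h | h
  all_goals try exact absurd h hvT
  · exact ⟨b, c, h, by simp, by simp, hbc.ne, hab.ne', hac.ne'⟩
  · exact ⟨c, b, h, by simp, by simp, hbc.ne', hac.ne', hab.ne'⟩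
  · exact ⟨a, c, h, by simp, by simp, hac.ne, hab.ne, hbc.ne'⟩
  · exact ⟨c, a, h, by simp, by simp, hac.ne', hbc.ne', hab.ne⟩
  · exact ⟨a, b, h, by simp, by simp, hab.ne, hac.ne, hbc.ne⟩
  · exact ⟨b, a, h, by simp, by simp, hab.ne', hbc.ne, hac.ne⟩

lemma IsTTriangle.hasTCycleAvoiding {Δ : Set V} (hΔ : IsTTriangle G T Δ) (hS : Δ ∩ S = ∅) :
    HasTCycleAvoiding G T S := by
  obtain ⟨a, b, c, rfl, hab, hac, hbc, hT⟩ := hΔ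
  have hcyc : (Walk.cons hab (.cons hbc (.cons hac.symm .nil))).IsCycle := by
    simp [Walk.cons_isCycle_iff, hab.ne, hbc.ne, hac.ne, hab.ne', hac.ne']
  refine ⟨a, _, hcyc, fun x hx hxS => ?_, ?_⟩
  · simp only [Walk.support_cons, Walk.support_nil, List.mem_cons, List.not_mem_nil,
      or_false] at hx
    exact hS.subset ⟨by grind, hxS⟩
  · rcases hT with h | h | h <;> exact ⟨_, h, by simp⟩

lemma Chordal.hasTTriangleAvoiding_of_hasTCycleAvoiding (hG : Chordal G)
    (h : HasTCycleAvoiding G T S) : HasTTriangleAvoiding G T S := by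
  classical
  obtain ⟨u, c, hc, hcS, t, htT, htc⟩ := h
  obtain ⟨a, b, ha, hb, hta, htb, hab⟩ :=
    hG.exists_adj_adj_of_isCycle (c.rotate t htc) (hc.rotate htc)
  rw [Walk.mem_support_rotate_iff] at ha hb
  refine ⟨{t, a, b}, ⟨t, a, b, rfl, hta, htb, hab, Or.inl htT⟩, ?_⟩
  rw [Set.eq_empty_iff_forall_notMem]
  rintro x ⟨hx, hxS⟩
  simp only [Set.mem_insert_iff, Set.mem_singleton_iff] at hx
  rcases hx with rfl | rfl | rfl <;> exact hcS x ‹_› hxS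

lemma Chordal.isSubsetFVS_iff (hG : Chordal G) :
    IsSubsetFVS G T S ↔ ¬ HasTTriangleAvoiding G T S :=
  not_congr ⟨hG.hasTTriangleAvoiding_of_hasTCycleAvoiding,
    fun ⟨_, hΔ, hΔS⟩ => hΔ.hasTCycleAvoiding hΔS⟩

lemma exists_isTTriangle_inter_eq_singleton (hS : ¬ HasTTriangleAvoiding G T S) {v : V}
    (hv : HasTTriangleAvoiding G T (S \ {v})) :
    ∃ Δ, IsTTriangle G T Δ ∧ Δ ∩ S = {v} := by
  obtain ⟨Δ, hΔ, hΔv⟩ := hv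
  obtain ⟨x, hxΔ, hxS⟩ := Set.nonempty_iff_ne_empty.mpr fun h => hS ⟨Δ, hΔ, h⟩
  have hmem : ∀ z ∈ Δ, z ∈ S → z = v := fun z hzΔ hzS => by
    by_contra hzv
    exact hΔv.subset ⟨hzΔ, hzS, hzv⟩
  obtain rfl := hmem x hxΔ hxS
  exact ⟨Δ, hΔ, Set.eq_singleton_iff_unique_mem.mpr ⟨⟨hxΔ, hxS⟩, fun z hz => hmem z hz.1 hz.2⟩⟩

lemma subset_of_inter_eq_singleton_of_isClique (hS : ¬ HasTTriangleAvoiding G T S)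
    {v : V} (hvT : v ∉ T) {Q Δ₁ Δ₂ : Set V} (hQ : G.IsClique Q) (h₁ : IsTTriangle G T Δ₁)
    (hQ₁ : Δ₁ ⊆ Q) (hQ₂ : Δ₂ ⊆ Q) (hS₁ : Δ₁ ∩ S = {v}) (hS₂ : Δ₂ ∩ S = {v}) :
    Δ₂ ⊆ Δ₁ := by
  have notMem_of_ne {Δ : Set V} (hΔ : Δ ∩ S = {v}) {z : V} (hz : z ∈ Δ) (hzv : z ≠ v) :
      z ∉ S := fun hzS => hzv (hΔ.subset ⟨hz, hzS⟩)
  intro w hw₂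
  by_contra hw₁
  obtain ⟨t, u, htT, ht, hu, htu, htv, huv⟩ :=
    h₁.exists_terminal_of_mem (hS₁.symm.subset rfl).1 hvT
  have hwt : t ≠ w := fun h => hw₁ (h ▸ ht)
  have hwu : u ≠ w := fun h => hw₁ (h ▸ hu)
  have hwv : w ≠ v := fun h => hw₁ (h ▸ (hS₁.symm.subset rfl).1)
  refine hS ⟨{t, u, w}, ⟨t, u, w, rfl, hQ (hQ₁ ht) (hQ₁ hu) htu, hQ (hQ₁ ht) (hQ₂ hw₂) hwt,
    hQ (hQ₁ hu) (hQ₂ hw₂) hwu, Or.inl htT⟩, ?_⟩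
  rw [Set.eq_empty_iff_forall_notMem]
  rintro x ⟨hx, hxS⟩
  simp only [Set.mem_insert_iff, Set.mem_singleton_iff] at hx
  rcases hx with rfl | rfl | rfl
  exacts [notMem_of_ne hS₁ ht htv hxS, notMem_of_ne hS₁ hu huv hxS, notMem_of_ne hS₂ hw₂ hwv hxS]

end

theorem stmt12_general {V : Type} (G : SimpleGraph V) (T : Set V)
    (hG : Chordal G) (S : Set V)
    (hS : IsSubsetFVS G T S)
    (hmin : ∀ S' : Set V, S' ⊂ S → ¬ IsSubsetFVS G T S')
    (v : V) (hvS : v ∈ S) (hvT : v ∉ T)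
    (Q : Set V) (hQ : G.IsClique Q)
    (hQv : ∀ Δ : Set V, IsTTriangle G T Δ → v ∈ Δ → Δ ⊆ Q) :
    ∃! Δ : Set V, IsTTriangle G T Δ ∧ Δ ∩ S = {v} := by
  rw [hG.isSubsetFVS_iff] at hS
  have hv : HasTTriangleAvoiding G T (S \ {v}) :=
    not_not.mp fun h => hmin _ (Set.sdiff_singleton_ssubset.mpr hvS) (hG.isSubsetFVS_iff.mpr h)
  obtain ⟨Δ₀, hΔ₀, hΔ₀S⟩ := exists_isTTriangle_inter_eq_singleton hS hv
  have hsubQ {Δ : Set V} (hΔ : IsTTriangle G T Δ) (hΔS : Δ ∩ S = {v}) : Δ ⊆ Q :=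
    hQv Δ hΔ (hΔS.symm.subset rfl).1
  have hsub {Δ₁ Δ₂ : Set V} (h₁ : IsTTriangle G T Δ₁) (hS₁ : Δ₁ ∩ S = {v})
      (h₂ : IsTTriangle G T Δ₂) (hS₂ : Δ₂ ∩ S = {v}) : Δ₂ ⊆ Δ₁ :=
    subset_of_inter_eq_singleton_of_isClique hS hvT hQ h₁ (hsubQ h₁ hS₁) (hsubQ h₂ hS₂) hS₁ hS₂
  exact ⟨Δ₀, ⟨hΔ₀, hΔ₀S⟩, fun Δ ⟨hΔ, hΔS⟩ =>
    (hsub hΔ₀ hΔ₀S hΔ hΔS).antisymm (hsub hΔ hΔS hΔ₀ hΔ₀S)⟩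

/-- a non-terminal vertex of a minimal subset-FVS whose
`T`-triangles all lie inside a common clique is the sole solution vertex of a
unique `T`-triangle. -/
theorem stmt12 {V : Type} [Fintype V] (G : SimpleGraph V) (T : Set V)
    (hG : Chordal G) (S : Set V)
    (hS : IsSubsetFVS G T S)
    (hmin : ∀ S' : Set V, S' ⊂ S → ¬ IsSubsetFVS G T S')
    (v : V) (hvS : v ∈ S) (hvT : v ∉ T)
    (Q : Set V) (hQ : G.IsClique Q)
    (hQv : ∀ Δ : Set V, IsTTriangle G T Δ → v ∈ Δ → Δ ⊆ Q) :
    ∃! Δ : Set V, IsTTriangle G T Δ ∧ Δ ∩ S = {v} :=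
  stmt12_general G T hG S hS hmin v hvS hvT Q hQ hQv
end

section
/- Let G be a chordal graph with terminal set T ⊆ V(G), and let S be a minimal subset feedback vertex set of G with respect to T, i.e., S is a subset-FVS and no proper subset of S is a subset-FVS. Let v ∈ S be a simplicial vertex of G with v ∉ T. Then there is exactly one T-triangle Δ of G such that Δ ∩ S = {v}. -/
open SimpleGraph

variable {V : Type*}

/-! By minimality, `S \ {v}` is not a subset-FVS, so some `T`-cycle meets `S` only in `v`. Let
`a`, `b` be the neighbours of `v` on it; they are adjacent since `v` is simplicial. Unless the
cycle is the triangle `v a b`, the chord `ab` short-cuts it past `v` to a `T`-cycle (as `v ∉ T`)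
avoiding `S`. For uniqueness, a second such triangle would contain a neighbour `w ∉ S` of `v`
outside the first one, `v x y`; then `x y w` is a `T`-triangle avoiding `S`. -/

namespace SimpleGraph.Walk

variable {G : SimpleGraph V}

theorem IsCycle.exists_adj_adj_isPath {v : V} {c : G.Walk v v} (hc : c.IsCycle) :
    ∃ (a b : V) (q : G.Walk a b), G.Adj v a ∧ G.Adj v b ∧ a ≠ b ∧ q.IsPath ∧
      v ∉ q.support ∧ ∀ x, x ∈ c.support ↔ x = v ∨ x ∈ q.support := by
  cases c with
  | nil => exact absurd rfl hc.ne_nil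
  | cons hva p =>
    have hp : p.IsPath := ((cons_isCycle_iff p hva).1 hc).1
    have hpnil : ¬ p.Nil := fun h => hva.ne (h.eq).symm
    have hab := hc.snd_ne_penultimate
    rw [snd_cons, penultimate_cons_of_not_nil _ _ hpnil] at hab
    have hsupp : p.support = p.dropLast.support ++ [v] := by
      rw [← support_concat _ (p.adj_penultimate hpnil), concat_dropLast]
    have hnodup := hp.support_nodup
    rw [hsupp, List.nodup_append] at hnodup
    refine ⟨_, _, p.dropLast, hva, (p.adj_penultimate hpnil).symm, hab, hp.dropLast,
      fun h => by simpa using hnodup.2.2 _ h _ (List.mem_singleton_self v), fun x => ?_⟩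
    rw [support_cons, List.mem_cons, hsupp]
    simp only [List.mem_append, List.mem_singleton]
    tauto

theorem IsPath.support_eq_pair_or_isCycle_cons {a b : V} {q : G.Walk a b} (hq : q.IsPath)
    (hba : G.Adj b a) : q.support = [a, b] ∨ (cons hba q).IsCycle := by
  by_cases h : s(a, b) ∈ q.edges
  · left
    rw [hq.eq_adj_toWalk_of_mem_edges h]
    simp
  · exact Or.inr ((cons_isCycle_iff q hba).2 ⟨hq, by rwa [Sym2.eq_swap]⟩)

end SimpleGraph.Walk

section SubsetFVS

variable {G : SimpleGraph V} {T S : Set V}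

theorem IsSimplicial.adj {v x y : V} (hv : IsSimplicial G v) (hx : G.Adj v x) (hy : G.Adj v y)
    (hxy : x ≠ y) : G.Adj x y :=
  hv (Set.mem_insert_of_mem _ hx) (Set.mem_insert_of_mem _ hy) hxy

theorem IsSubsetFVS.not_hasTTriangleAvoiding (hS : IsSubsetFVS G T S) :
    ¬ HasTTriangleAvoiding G T S := by
  rintro ⟨_, ⟨a, b, c, rfl, hab, hac, hbc, hT⟩, hΔS⟩
  have hnotS : ∀ x ∈ ({a, b, c} : Set V), x ∉ S := fun x hx hxS =>
    (Set.eq_empty_iff_forall_notMem.1 hΔS) x ⟨hx, hxS⟩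
  refine hS ⟨a, .cons hab (.cons hbc (.cons hac.symm .nil)), ?_, fun x hx => hnotS x ?_, ?_⟩
  · simp [Walk.cons_isCycle_iff, hab.ne, hac.ne, hbc.ne, hab.ne', hac.ne']
  · simp only [Walk.support_cons, Walk.support_nil, List.mem_cons, List.not_mem_nil] at hx
    simp only [Set.mem_insert_iff, Set.mem_singleton_iff]
    tauto
  · rcases hT with h | h | h <;> exact ⟨_, h, by simp⟩

theorem isTTriangle_and_inter_eq_singleton_iff {v : V} (hvT : v ∉ T) {Δ : Set V} :
    IsTTriangle G T Δ ∧ Δ ∩ S = {v} ↔ v ∈ S ∧ ∃ x y, Δ = {v, x, y} ∧ G.Adj v x ∧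
      G.Adj v y ∧ G.Adj x y ∧ (x ∈ T ∨ y ∈ T) ∧ x ∉ S ∧ y ∉ S := by
  constructor
  · rintro ⟨⟨a, b, c, rfl, hab, hac, hbc, hT⟩, hI⟩
    have hv : v ∈ ({a, b, c} : Set V) ∩ S := hI ▸ rfl
    have hnotS : ∀ z ∈ ({a, b, c} : Set V), z ≠ v → z ∉ S := fun z hz hzv hzS =>
      hzv (hI ▸ ⟨hz, hzS⟩ : z ∈ ({v} : Set V))
    refine ⟨hv.2, ?_⟩
    rcases hv.1 with rfl | rfl | rfl
    · exact ⟨b, c, rfl, hab, hac, hbc, hT.resolve_left hvT, hnotS b (by simp) hab.ne',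
        hnotS c (by simp) hac.ne'⟩
    · exact ⟨a, c, Set.insert_comm _ _ _, hab.symm, hbc, hac,
        hT.imp_right fun h => h.resolve_left hvT, hnotS a (by simp) hab.ne,
        hnotS c (by simp) hbc.ne'⟩
    · exact ⟨a, b, by rw [Set.pair_comm b v, Set.insert_comm a v], hac.symm, hbc.symm, hab,
        hT.imp_right fun h => h.resolve_right hvT, hnotS a (by simp) hac.ne,
        hnotS b (by simp) hbc.ne⟩
  · rintro ⟨hvS, x, y, rfl, hvx, hvy, hxy, hxyT, hxS, hyS⟩
    exact ⟨⟨v, x, y, rfl, hvx, hvy, hxy, Or.inr hxyT⟩,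
      by simp [Set.insert_inter_of_mem, Set.insert_inter_of_notMem, hvS, hxS, hyS]⟩

theorem exists_tTriangle_of_not_isSubsetFVS_sdiff (hS : IsSubsetFVS G T S) {v : V}
    (hvT : v ∉ T) (hsimp : IsSimplicial G v) (hv : ¬ IsSubsetFVS G T (S \ {v})) :
    ∃ x y, G.Adj v x ∧ G.Adj v y ∧ G.Adj x y ∧ (x ∈ T ∨ y ∈ T) ∧ x ∉ S ∧ y ∉ S := by
  classical
  obtain ⟨u, c, hc, hcS, t, htT, htc⟩ := not_not.1 hv
  have hvc : v ∈ c.support := by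
    by_contra h
    exact hS ⟨u, c, hc, fun x hx hxS => hcS x hx ⟨hxS, fun hxv => h (hxv ▸ hx)⟩, t, htT, htc⟩
  obtain ⟨a, b, q, hva, hvb, hab, hq, hvq, hsupp⟩ := (hc.rotate hvc).exists_adj_adj_isPath
  have hqS : ∀ x ∈ q.support, x ∉ S := fun x hx hxS =>
    hcS x ((c.mem_support_rotate_iff v hvc).1 ((hsupp x).2 (Or.inr hx)))
      ⟨hxS, ne_of_mem_of_not_mem hx hvq⟩
  have htq : t ∈ q.support :=
    ((hsupp t).1 ((c.mem_support_rotate_iff v hvc).2 htc)).resolve_left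
      (ne_of_mem_of_not_mem htT hvT)
  have hadj := hsimp.adj hva hvb hab
  rcases hq.support_eq_pair_or_isCycle_cons hadj.symm with hpair | hcyc
  · rw [hpair] at htq hqS
    refine ⟨a, b, hva, hvb, hadj, ?_, hqS a (by simp), hqS b (by simp)⟩
    rcases List.mem_pair.1 htq with rfl | rfl <;> simp [htT]
  · refine absurd ⟨b, _, hcyc, fun x hx => ?_, t, htT, by simp [htq]⟩ hS
    rw [Walk.support_cons, List.mem_cons] at hx
    rcases hx with rfl | hx
    exacts [hqS x q.end_mem_support, hqS x hx]

theorem subset_of_isTTriangle_inter_eq_singleton (hS : IsSubsetFVS G T S) {v : V} (hvT : v ∉ T)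
    (hsimp : IsSimplicial G v) {Δ₁ Δ₂ : Set V} (h₁ : IsTTriangle G T Δ₁ ∧ Δ₁ ∩ S = {v})
    (h₂ : IsTTriangle G T Δ₂ ∧ Δ₂ ∩ S = {v}) : Δ₂ ⊆ Δ₁ := by
  obtain ⟨-, x, y, rfl, hvx, hvy, hxy, hxyT, hxS, hyS⟩ :=
    (isTTriangle_and_inter_eq_singleton_iff hvT).1 h₁
  obtain ⟨-, x', y', rfl, hvx', hvy', -, -, hx'S, hy'S⟩ :=
    (isTTriangle_and_inter_eq_singleton_iff hvT).1 h₂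
  have hnbr : ∀ w, G.Adj v w → w ∉ S → w = x ∨ w = y := by
    intro w hvw hwS
    by_contra! hw
    refine hS.not_hasTTriangleAvoiding ⟨{x, y, w}, ⟨x, y, w, rfl, hxy, hsimp.adj hvx hvw hw.1.symm,
      hsimp.adj hvy hvw hw.2.symm, hxyT.imp_right Or.inl⟩, ?_⟩
    simp [Set.insert_inter_of_notMem, hxS, hyS, hwS]
  have hmem : ∀ w, G.Adj v w → w ∉ S → w ∈ ({v, x, y} : Set V) := fun w hvw hwS => by
    rcases hnbr w hvw hwS with rfl | rfl <;> simp
  simp only [Set.insert_subset_iff, Set.singleton_subset_iff]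
  exact ⟨Set.mem_insert _ _, hmem x' hvx' hx'S, hmem y' hvy' hy'S⟩

end SubsetFVS

theorem stmt13_general {V : Type} (G : SimpleGraph V) (T : Set V)
    (S : Set V)
    (hS : IsSubsetFVS G T S)
    (hmin : ∀ S' : Set V, S' ⊂ S → ¬ IsSubsetFVS G T S')
    (v : V) (hvS : v ∈ S) (hvT : v ∉ T)
    (hsimp : IsSimplicial G v) :
    ∃! Δ : Set V, IsTTriangle G T Δ ∧ Δ ∩ S = {v} := by
  obtain ⟨x, y, hvx, hvy, hxy, hxyT, hxS, hyS⟩ := exists_tTriangle_of_not_isSubsetFVS_sdiff hS hvT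
    hsimp (hmin _ (Set.sdiff_singleton_ssubset.2 hvS))
  have hΔ := (isTTriangle_and_inter_eq_singleton_iff hvT).2
    ⟨hvS, x, y, rfl, hvx, hvy, hxy, hxyT, hxS, hyS⟩
  exact ⟨_, hΔ, fun Δ hΔ' =>
    (subset_of_isTTriangle_inter_eq_singleton hS hvT hsimp hΔ hΔ').antisymm
      (subset_of_isTTriangle_inter_eq_singleton hS hvT hsimp hΔ' hΔ)⟩

/-- a non-terminal simplicial vertex of a minimal subset-FVS is
the sole solution vertex of a unique `T`-triangle. -/
theorem stmt13 {V : Type} [Fintype V] (G : SimpleGraph V) (T : Set V)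
    (hG : Chordal G) (S : Set V)
    (hS : IsSubsetFVS G T S)
    (hmin : ∀ S' : Set V, S' ⊂ S → ¬ IsSubsetFVS G T S')
    (v : V) (hvS : v ∈ S) (hvT : v ∉ T)
    (hsimp : IsSimplicial G v) :
    ∃! Δ : Set V, IsTTriangle G T Δ ∧ Δ ∩ S = {v} :=
  stmt13_general G T S hS hmin v hvS hvT hsimp
end

section
/- Let G be a chordal graph with terminal set T ⊆ V(G), let k be a nonnegative integer, and let t ∈ T be a simplicial vertex of G with closed neighbourhood C = N[t] = {t, x, y, z} of size four. If G has a subset feedback vertex set with respect to T of size at most k that contains at least two vertices of C, then G has a subset feedback vertex set with respect to T of size at most k that does not contain t. -/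
open SimpleGraph

variable {V : Type*}

/-!
If a solution `S` contains `t`, it also contains some other vertex `a` of `N[t]`. Exchange `t` for
a neighbour `b ≠ a` of `t`. A `T`-cycle avoiding the new set must pass through `t`, since `S` blocks
all others; but a cycle through `t` uses two distinct neighbours of `t`, while at most one of the
three neighbours of `t` now lies outside the set.
-/

theorem IsSubsetFVS.of_sdiff_singleton_subset {G : SimpleGraph V} {T S S' : Set V} {t : V}
    (hS : IsSubsetFVS G T S) (hSS' : S \ {t} ⊆ S')
    (hN : (G.neighborSet t \ S').Subsingleton) : IsSubsetFVS G T S' := by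
  classical
  rintro ⟨v, c, hc, havoid, t', ht'T, ht'c⟩
  by_cases htc : t ∈ c.support
  · set c' := c.rotate t htc
    have hc' : c'.IsCycle := hc.rotate htc
    have havoid' : ∀ p ∈ c'.support, p ∉ S' :=
      fun p hp ↦ havoid p ((c.mem_support_rotate_iff t htc).mp hp)
    exact hc'.snd_ne_penultimate <| hN
      ⟨c'.adj_snd hc'.not_nil, havoid' _ (c'.getVert_mem_support 1)⟩
      ⟨(c'.adj_penultimate hc'.not_nil).symm, havoid' _ (c'.getVert_mem_support _)⟩
  · exact hS ⟨v, c, hc, fun p hp hpS ↦ havoid p hp (hSS' ⟨hpS, fun h ↦ htc (h ▸ hp)⟩), t', ht'T,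
      ht'c⟩

theorem Set.ncard_insert_sdiff_singleton_le {α : Type*} {s : Set α} {a : α} (b : α)
    (ha : a ∈ s) : (insert b (s \ {a})).ncard ≤ s.ncard := by
  by_cases hb : b ∈ s
  · obtain rfl | hba := eq_or_ne b a
    · rw [Set.insert_sdiff_singleton, Set.insert_eq_of_mem hb]
    · rw [Set.insert_eq_of_mem (show b ∈ s \ {a} from ⟨hb, hba⟩)]
      exact Set.ncard_sdiff_singleton_le s a
  · exact (Set.ncard_exchange hb ha).le

theorem Set.subsingleton_sdiff_pair_of_ncard_eq_three {α : Type*} {s : Set α} {a b : α}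
    (hs : s.ncard = 3) (ha : a ∈ s) (hb : b ∈ s) (hab : a ≠ b) : (s \ {a, b}).Subsingleton := by
  obtain ⟨c, hc⟩ : ∃ c, s \ {a, b} = {c} := by
    rw [← Set.ncard_eq_one, Set.ncard_sdiff (Set.pair_subset ha hb), Set.ncard_pair hab, hs]
  exact hc ▸ Set.subsingleton_singleton

theorem stmt14_general {V : Type} (G : SimpleGraph V) (T : Set V)
    (k : ℕ) (t x y z : V)
    (hC : closedNbhd G t = {t, x, y, z})
    (hcard : ({t, x, y, z} : Set V).ncard = 4)
    (hex : ∃ S : Set V, IsSubsetFVS G T S ∧ S.ncard ≤ k ∧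
      2 ≤ (S ∩ {t, x, y, z}).ncard) :
    ∃ S : Set V, IsSubsetFVS G T S ∧ S.ncard ≤ k ∧ t ∉ S := by
  obtain ⟨S, hS, hk, hint⟩ := hex
  by_cases htS : t ∉ S
  · exact ⟨S, hS, hk, htS⟩
  rw [not_not] at htS
  have hN : G.neighborSet t = {t, x, y, z} \ {t} := by
    rw [← hC, closedNbhd, Set.insert_sdiff_self_of_notMem (G.notMem_neighborSet_self)]
  have hN3 : (G.neighborSet t).ncard = 3 := by
    rw [hN, Set.ncard_sdiff_singleton_of_mem (by simp), hcard]
  obtain ⟨a, ⟨haS, haC⟩, hat⟩ :=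
    Set.exists_ne_of_one_lt_ncard (s := S ∩ {t, x, y, z}) (by omega) t
  have haN : a ∈ G.neighborSet t := hN ▸ ⟨haC, hat⟩
  obtain ⟨b, hbN, hba⟩ := Set.exists_ne_of_one_lt_ncard (s := G.neighborSet t) (by omega) a
  refine ⟨insert b (S \ {t}), hS.of_sdiff_singleton_subset (Set.subset_insert _ _) ?_,
    (Set.ncard_insert_sdiff_singleton_le b htS).trans hk, ?_⟩
  · refine (Set.subsingleton_sdiff_pair_of_ncard_eq_three hN3 haN hbN hba.symm).anti ?_
    rintro u ⟨huN, huS'⟩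
    refine ⟨huN, ?_⟩
    rintro (rfl | rfl)
    · exact huS' (Or.inr ⟨haS, hat⟩)
    · exact huS' (Or.inl rfl)
  · rintro (htb | ⟨-, htt⟩)
    · exact G.notMem_neighborSet_self (htb ▸ hbN)
    · exact htt rfl

/-- if a solution of size at most `k` contains two vertices of
the simplicial clique `{t, x, y, z}` of the terminal `t`, then there is a
solution of size at most `k` avoiding `t`. -/
theorem stmt14 {V : Type} [Fintype V] (G : SimpleGraph V) (T : Set V)
    (hG : Chordal G) (k : ℕ) (t x y z : V) (ht : t ∈ T)
    (hsimp : IsSimplicial G t)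
    (hC : closedNbhd G t = {t, x, y, z})
    (hcard : ({t, x, y, z} : Set V).ncard = 4)
    (hex : ∃ S : Set V, IsSubsetFVS G T S ∧ S.ncard ≤ k ∧
      2 ≤ (S ∩ {t, x, y, z}).ncard) :
    ∃ S : Set V, IsSubsetFVS G T S ∧ S.ncard ≤ k ∧ t ∉ S :=
  stmt14_general G T k t x y z hC hcard hex
end

section
/- Let G be a chordal graph with terminal set T ⊆ V(G), and let v be a simplicial vertex of G with closed neighbourhood N[v] = {v, a, b} of size three. If S is a subset feedback vertex set of G with respect to T containing v, then both (S ∖ {v}) ∪ {a} and (S ∖ {v}) ∪ {b} are subset feedback vertex sets of G with respect to T, each of size at most |S|. -/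
open SimpleGraph

variable {V : Type*}

namespace SimpleGraph

variable {G : SimpleGraph V}

/-- Rotating the cycle to start at `v`, its second and penultimate vertices are distinct
neighbours of `v` on the cycle. -/
lemma Walk.IsCycle.exists_adj_ne_mem_support [DecidableEq V] {u v : V} {c : G.Walk u u}
    (hc : c.IsCycle) (hv : v ∈ c.support) :
    ∃ w w', w ≠ w' ∧ G.Adj v w ∧ G.Adj v w' ∧ w ∈ c.support ∧ w' ∈ c.support := by
  have hc' : (c.rotate v hv).IsCycle := hc.rotate hv
  set c' := c.rotate v hv
  refine ⟨c'.snd, c'.penultimate, hc'.snd_ne_penultimate, c'.adj_snd hc'.not_nil,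
    (c'.adj_penultimate hc'.not_nil).symm, ?_, ?_⟩
  · exact (c.mem_support_rotate_iff v hv).mp (c'.getVert_mem_support 1)
  · exact (c.mem_support_rotate_iff v hv).mp (c'.getVert_mem_support _)

lemma Walk.IsCycle.mem_support_of_neighborSet_subset {u v x y : V} {c : G.Walk u u}
    (hc : c.IsCycle) (hv : v ∈ c.support) (hN : G.neighborSet v ⊆ {x, y}) :
    x ∈ c.support := by
  classical
  obtain ⟨w, w', hne, hw, hw', hwc, hw'c⟩ := hc.exists_adj_ne_mem_support hv
  rcases hN hw with rfl | rfl
  · exact hwc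
  rcases hN hw' with rfl | rfl
  · exact hw'c
  · exact (hne rfl).elim

end SimpleGraph

/-- A `T`-cycle avoiding `S \ {v} ∪ {x}` must pass through `v`, since otherwise it avoids `S`;
but every cycle through `v` passes through `x`. -/
lemma IsSubsetFVS.exchange {G : SimpleGraph V} {T S : Set V} {v x y : V}
    (hS : IsSubsetFVS G T S) (hN : G.neighborSet v ⊆ {x, y}) :
    IsSubsetFVS G T (S \ {v} ∪ {x}) := by
  rintro ⟨u, c, hc, havoid, hT⟩
  by_cases hv : v ∈ c.support
  · exact havoid x (hc.mem_support_of_neighborSet_subset hv hN) (Or.inr rfl)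
  · refine hS ⟨u, c, hc, fun z hz hzS => havoid z hz (Or.inl ⟨hzS, ?_⟩), hT⟩
    rintro rfl
    exact hv hz

lemma Set.ncard_diff_singleton_union_singleton_le {α : Type*} {s : Set α} {a : α} (b : α)
    (hs : s.Finite) (ha : a ∈ s) : (s \ {a} ∪ {b}).ncard ≤ s.ncard := by
  rw [Set.union_singleton]
  calc (insert b (s \ {a})).ncard ≤ (s \ {a}).ncard + 1 := Set.ncard_insert_le _ _
    _ = s.ncard := Set.ncard_sdiff_singleton_add_one ha hs

lemma neighborSet_subset_of_closedNbhd_eq {G : SimpleGraph V} {v a b : V}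
    (hC : closedNbhd G v = {v, a, b}) : G.neighborSet v ⊆ {a, b} := by
  intro u hu
  have hu' : u ∈ closedNbhd G v := Set.mem_insert_of_mem _ hu
  rw [hC] at hu'
  exact hu'.resolve_left (G.ne_of_adj hu).symm

theorem stmt17_general {V : Type} [Fintype V] (G : SimpleGraph V) (T : Set V)
    (v a b : V)
    (hC : closedNbhd G v = {v, a, b})
    (S : Set V) (hS : IsSubsetFVS G T S) (hvS : v ∈ S) :
    (IsSubsetFVS G T ((S \ {v}) ∪ {a}) ∧ ((S \ {v}) ∪ {a}).ncard ≤ S.ncard) ∧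
    (IsSubsetFVS G T ((S \ {v}) ∪ {b}) ∧ ((S \ {v}) ∪ {b}).ncard ≤ S.ncard) := by
  have hN := neighborSet_subset_of_closedNbhd_eq hC
  exact ⟨⟨hS.exchange hN, Set.ncard_diff_singleton_union_singleton_le a S.toFinite hvS⟩,
    ⟨hS.exchange (Set.pair_comm a b ▸ hN),
      Set.ncard_diff_singleton_union_singleton_le b S.toFinite hvS⟩⟩

/-- for a simplicial vertex `v` with `N[v] = {v, a, b}`, a
solution containing `v` can exchange `v` for `a` or for `b`. -/
theorem stmt17 {V : Type} [Fintype V] (G : SimpleGraph V) (T : Set V)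
    (hG : Chordal G) (v a b : V)
    (hsimp : IsSimplicial G v)
    (hC : closedNbhd G v = {v, a, b})
    (hcard : ({v, a, b} : Set V).ncard = 3)
    (S : Set V) (hS : IsSubsetFVS G T S) (hvS : v ∈ S) :
    (IsSubsetFVS G T ((S \ {v}) ∪ {a}) ∧ ((S \ {v}) ∪ {a}).ncard ≤ S.ncard) ∧
    (IsSubsetFVS G T ((S \ {v}) ∪ {b}) ∧ ((S \ {v}) ∪ {b}).ncard ≤ S.ncard) :=
  stmt17_general G T v a b hC S hS hvS
end
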